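/- arXiv:2503.04238 — 8 statements merged into one kernel-verified Lean document; each statement's English description precedes it below -/
import Mathlib

section
/- Fix T > 0 and ν > 0. Assume the flow Poincaré inequality ∫₀ᵀ ‖P_t f‖² dt ≤ (1/ν) ∫₀ᵀ ⟨P_t f, −𝓛 P_t f⟩ dt holds for every f ∈ D. Then for every f ∈ D and every t ≥ 0 one has ∫_t^{t+T} ‖P_s f‖² ds ≤ e^{−2νt} ∫₀ᵀ ‖P_s f‖² ds. -/
open MeasureTheory Set
open scoped RealInnerProductSpace

/-- **Flow Poincaré inequality implies exponential decay of time-averaged `L²` norms.**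
Setting: `H` a real Hilbert space, `(P t)` a semigroup of bounded operators with `P 0 = id`,
`D` a `P`-invariant subspace, and `L` the generator, so that for `f ∈ D` the curve
`t ↦ P t f` is differentiable on `[0, ∞)` with derivative `L (P t f)` and
`t ↦ ⟪P t f, L (P t f)⟫` is continuous on `[0, ∞)`.
If the flow Poincaré inequality with constant `ν⁻¹` and duration `T` holds for all `f ∈ D`,
then `∫_t^{t+T} ‖P s f‖² ds ≤ e^{-2νt} ∫_0^T ‖P s f‖² ds` for all `f ∈ D` and `t ≥ 0`. -/
theorem stmt_0
    {H : Type*} [NormedAddCommGroup H] [InnerProductSpace ℝ H] [CompleteSpace H]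
    (P : ℝ → H →L[ℝ] H)
    (hP0 : P 0 = ContinuousLinearMap.id ℝ H)
    (hPadd : ∀ s t : ℝ, 0 ≤ s → 0 ≤ t → P (s + t) = (P s).comp (P t))
    (D : Submodule ℝ H)
    (hPD : ∀ t : ℝ, 0 ≤ t → ∀ f ∈ D, P t f ∈ D)
    (L : H →ₗ[ℝ] H)
    (hderiv : ∀ f ∈ D, ∀ t : ℝ, 0 ≤ t →
      HasDerivWithinAt (fun s => P s f) (L (P t f)) (Set.Ici 0) t)
    (hcont : ∀ f ∈ D, ContinuousOn (fun t => ⟪P t f, L (P t f)⟫) (Set.Ici 0))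
    (T ν : ℝ) (hT : 0 < T) (hν : 0 < ν)
    (hFPI : ∀ f ∈ D,
      ∫ t in (0:ℝ)..T, ‖P t f‖ ^ 2 ≤
        (1 / ν) * ∫ t in (0:ℝ)..T, ⟪P t f, -(L (P t f))⟫) :
    ∀ f ∈ D, ∀ t : ℝ, 0 ≤ t →
      ∫ s in t..(t + T), ‖P s f‖ ^ 2 ≤
        Real.exp (-2 * ν * t) * ∫ s in (0:ℝ)..T, ‖P s f‖ ^ 2 := by
  -- general facts for any element of D
  have hnderiv : ∀ g ∈ D, ∀ s : ℝ, 0 ≤ s →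
      HasDerivWithinAt (fun u => ‖P u g‖ ^ 2) (2 * ⟪P s g, L (P s g)⟫) (Ici 0) s := by
    intro g hg s hs
    have h := (hderiv g hg s hs).inner ℝ (hderiv g hg s hs)
    simpa [real_inner_self_eq_norm_sq, real_inner_comm, two_mul] using h
  have hncont : ∀ g ∈ D, ContinuousOn (fun u => ‖P u g‖ ^ 2) (Ici 0) :=
    fun g hg u hu => ((hnderiv g hg u hu).continuousWithinAt)
  -- FTC for the squared norm
  have hFTC : ∀ g ∈ D, ∀ a b : ℝ, 0 ≤ a → a ≤ b →
      ∫ s in a..b, 2 * ⟪P s g, L (P s g)⟫ = ‖P b g‖ ^ 2 - ‖P a g‖ ^ 2 := by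
    intro g hg a b ha hab
    have hsub : Icc a b ⊆ Ici 0 := fun x hx => le_trans ha hx.1
    refine intervalIntegral.integral_eq_sub_of_hasDeriv_right_of_le hab
      ((hncont g hg).mono hsub) (fun x hx => ?_) ?_
    · exact (hnderiv g hg x (le_trans ha hx.1.le)).mono
        (fun y hy => le_trans (le_trans ha hx.1.le) (le_of_lt hy))
    · apply ContinuousOn.intervalIntegrable
      apply continuousOn_const.mul ((hcont g hg).mono ?_)
      rw [uIcc_of_le hab]; exact hsub
  -- differential inequality: ∫₀ᵀ ‖P s g‖² ≤ (1/(2ν)) (‖g‖² − ‖P_T g‖²)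
  have hkey : ∀ g ∈ D, ∫ s in (0:ℝ)..T, ‖P s g‖ ^ 2 ≤
      (1 / (2 * ν)) * (‖g‖ ^ 2 - ‖P T g‖ ^ 2) := by
    intro g hg
    have h1 := hFPI g hg
    have h2 : ∫ s in (0:ℝ)..T, ⟪P s g, -(L (P s g))⟫
        = (-(1/2)) * ∫ s in (0:ℝ)..T, 2 * ⟪P s g, L (P s g)⟫ := by
      rw [← intervalIntegral.integral_const_mul]
      apply intervalIntegral.integral_congr
      intro x _
      simp [inner_neg_right]
    rw [h2, hFTC g hg 0 T le_rfl hT.le] at h1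
    have hg0 : P 0 g = g := by rw [hP0]; rfl
    rw [hg0] at h1
    calc ∫ s in (0:ℝ)..T, ‖P s g‖ ^ 2 ≤ (1/ν) * ((-(1/2)) * (‖P T g‖ ^ 2 - ‖g‖ ^ 2)) := h1
      _ = (1 / (2 * ν)) * (‖g‖ ^ 2 - ‖P T g‖ ^ 2) := by
          rw [one_div, one_div, one_div, mul_inv]; ring
  intro f hf t ht
  rcases eq_or_lt_of_le ht with rfl | htpos
  · simp only [neg_mul, mul_zero, neg_zero, Real.exp_zero, one_mul, zero_add]
    exact le_rfl
  set n : ℝ → ℝ := fun s => ‖P s f‖ ^ 2 with hn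
  have hnc : ContinuousOn n (Ici 0) := hncont f hf
  -- the time-shifted average
  set F : ℝ → ℝ := fun u => ∫ s in u..(u + T), n s with hFdef
  -- F u = ∫₀ᵀ ‖P s (P u f)‖²
  have hFshift : ∀ u : ℝ, 0 ≤ u → F u = ∫ s in (0:ℝ)..T, ‖P s (P u f)‖ ^ 2 := by
    intro u hu
    have h1 : ∀ s ∈ uIcc (0:ℝ) T, ‖P s (P u f)‖ ^ 2 = n (s + u) := by
      intro s hs
      rw [uIcc_of_le hT.le] at hs
      have := hPadd s u hs.1 hu
      simp only [hn]
      rw [this]; rfl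
    rw [intervalIntegral.integral_congr h1, intervalIntegral.integral_comp_add_right]
    simp only [zero_add, hFdef]
    rw [add_comm u T]
  -- differential inequality for F
  have hFle : ∀ u : ℝ, 0 ≤ u → F u ≤ (1 / (2 * ν)) * (n u - n (u + T)) := by
    intro u hu
    have hgD := hPD u hu f hf
    have h := hkey (P u f) hgD
    rw [← hFshift u hu] at h
    have e1 : P T (P u f) = P (T + u) f := by rw [hPadd T u hT.le hu]; rfl
    rw [e1] at h
    simpa [hn, add_comm] using h
  -- primitive G
  set G : ℝ → ℝ := fun u => ∫ s in (0:ℝ)..u, n s with hGdef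
  have hnint : ∀ a b : ℝ, 0 ≤ a → 0 ≤ b → IntervalIntegrable n volume a b := by
    intro a b ha hb
    apply ContinuousOn.intervalIntegrable (hnc.mono ?_)
    intro x hx
    rcases le_total a b with h | h
    · rw [uIcc_of_le h] at hx; exact le_trans ha hx.1
    · rw [uIcc_of_ge h] at hx; exact le_trans hb hx.1
  have hGderiv : ∀ u : ℝ, 0 < u → HasDerivAt G (n u) u := by
    intro u hu
    refine intervalIntegral.integral_hasDerivAt_right (hnint 0 u le_rfl hu.le) ?_ ?_
    · exact (hnc.mono Ioi_subset_Ici_self).stronglyMeasurableAtFilter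
        isOpen_Ioi u hu
    · exact (hnc.continuousAt (Ici_mem_nhds hu))
  have hGF : ∀ u : ℝ, 0 ≤ u → F u = G (u + T) - G u := by
    intro u hu
    simp only [hFdef, hGdef]
    rw [← intervalIntegral.integral_add_adjacent_intervals (hnint 0 u le_rfl hu)
      (hnint u (u + T) hu (by linarith))]
    ring
  have hFderiv : ∀ u : ℝ, 0 < u → HasDerivAt F (n (u + T) - n u) u := by
    intro u hu
    have h1 : HasDerivAt (fun v => G (v + T) - G v) (n (u + T) - n u) u := by
      have hA : HasDerivAt (fun v : ℝ => G (v + T)) (n (u + T)) u := by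
        have := (hGderiv (u + T) (by linarith)).comp u ((hasDerivAt_id u).add_const T)
        have h' : HasDerivAt (G ∘ fun x : ℝ => x + T) (n (u + T)) u := by simpa using this
        exact h'
      exact hA.sub (hGderiv u hu)
    apply h1.congr_of_eventuallyEq
    filter_upwards [eventually_gt_nhds hu] with v hv
    exact hGF v hv.le
  have hFcont : ContinuousOn F (Ici 0) := by
    have hGcont : ContinuousOn G (Ici 0) := by
      intro u hu
      have hu' : (0:ℝ) ≤ u := hu
      have hcc := intervalIntegral.continuousOn_primitive_interval'
        (hnint 0 (u + 1) le_rfl (by linarith)) (by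
          rw [uIcc_of_le (by linarith : (0:ℝ) ≤ u + 1)]
          exact ⟨le_rfl, by linarith⟩)
      rw [uIcc_of_le (by linarith : (0:ℝ) ≤ u + 1)] at hcc
      have h1 : ContinuousWithinAt G (Icc 0 (u + 1)) u := hcc u ⟨hu', by linarith⟩
      have hmem : Icc 0 (u + 1) ∈ nhdsWithin u (Ici 0) := by
        rw [← Ici_inter_Iic]
        exact inter_mem_nhdsWithin _ (Iic_mem_nhds (by linarith))
      exact h1.mono_of_mem_nhdsWithin hmem
    intro u hu
    have hu' : (0:ℝ) ≤ u := hu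
    have h1 : ContinuousWithinAt (fun v => G (v + T)) (Ici 0) u := by
      have : ContinuousWithinAt G (Ici 0) (u + T) := hGcont (u + T) (by
        simp only [mem_Ici]; linarith)
      refine ContinuousWithinAt.comp (g := G) (f := fun v => v + T) this
        ((continuous_id.add continuous_const).continuousWithinAt) ?_
      intro x hx
      simp only [mem_Ici] at hx ⊢
      linarith
    have h2 : ContinuousWithinAt F (Ici 0) u := by
      apply ContinuousWithinAt.congr (h1.sub (hGcont u hu)) (fun v hv => hGF v hv)
        (hGF u hu')
    exact h2
  -- the Gronwall-type function
  set φ : ℝ → ℝ := fun u => Real.exp (2 * ν * u) * F u with hφdef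
  have hexp : ∀ u : ℝ, HasDerivAt (fun v => Real.exp (2 * ν * v))
      (2 * ν * Real.exp (2 * ν * u)) u := by
    intro u
    have h := (((hasDerivAt_id u).const_mul (2 * ν))).exp
    simpa [mul_comm] using h
  have hφd : ∀ u ∈ Ioo 0 t, HasDerivAt φ (2 * ν * Real.exp (2 * ν * u) * F u
      + Real.exp (2 * ν * u) * (n (u + T) - n u)) u :=
    fun u hu => (hexp u).mul (hFderiv u hu.1)
  have hφanti : AntitoneOn φ (Icc 0 t) := by
    apply antitoneOn_of_deriv_nonpos (convex_Icc 0 t)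
    · exact ((Real.continuous_exp.comp (continuous_const.mul continuous_id)).continuousOn.mul
        (hFcont.mono Icc_subset_Ici_self))
    · rw [interior_Icc]
      exact fun u hu => (hφd u hu).differentiableAt.differentiableWithinAt
    · rw [interior_Icc]
      intro u hu
      rw [(hφd u hu).deriv]
      have hle := hFle u hu.1.le
      rw [one_div, inv_mul_eq_div, le_div_iff₀ (by positivity)] at hle
      nlinarith [Real.exp_pos (2 * ν * u)]
  have hmain := hφanti (left_mem_Icc.2 ht) (right_mem_Icc.2 ht) ht
  have hφ0 : φ 0 = F 0 := by simp [hφdef]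
  have hF0 : F 0 = ∫ s in (0:ℝ)..T, n s := by simp only [hFdef, zero_add]
  rw [hφ0, hF0, hφdef] at hmain
  have hgoal : F t ≤ Real.exp (-2 * ν * t) * ∫ s in (0:ℝ)..T, n s := by
    rw [show (-2 * ν * t) = -(2 * ν * t) by ring, Real.exp_neg, inv_mul_eq_div,
      le_div_iff₀ (Real.exp_pos _)]
    calc F t * Real.exp (2 * ν * t) = Real.exp (2 * ν * t) * F t := by ring
      _ ≤ _ := hmain
  exact hgoal
end

section
/- Fix T > 0 and ν > 0. Assume that for every f ∈ D and every t ≥ 0 one has ∫_t^{t+T} ‖P_s f‖² ds ≤ e^{−2νt} ∫₀ᵀ ‖P_s f‖² ds. Then the flow Poincaré inequality holds: for every f ∈ D, ∫₀ᵀ ‖P_t f‖² dt ≤ (1/ν) ∫₀ᵀ ⟨P_t f, −𝓛 P_t f⟩ dt. -/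
open MeasureTheory Set
open scoped RealInnerProductSpace

/-- **Exponential decay of time-averaged `L²` norms implies the flow Poincaré inequality.**
Setting: `H` a real Hilbert space, `(P t)` a semigroup of bounded operators with `P 0 = id`,
`D` a `P`-invariant subspace, and `L` the generator, so that for `f ∈ D` the curve
`t ↦ P t f` is differentiable on `[0, ∞)` with derivative `L (P t f)` and
`t ↦ ⟪P t f, L (P t f)⟫` is continuous on `[0, ∞)`.
If `∫_t^{t+T} ‖P s f‖² ds ≤ e^{-2νt} ∫_0^T ‖P s f‖² ds` holds for all `f ∈ D` and `t ≥ 0`,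
then the flow Poincaré inequality with constant `ν⁻¹` and duration `T` holds for all `f ∈ D`. -/
theorem stmt_1
    {H : Type*} [NormedAddCommGroup H] [InnerProductSpace ℝ H] [CompleteSpace H]
    (P : ℝ → H →L[ℝ] H)
    (hP0 : P 0 = ContinuousLinearMap.id ℝ H)
    (hPadd : ∀ s t : ℝ, 0 ≤ s → 0 ≤ t → P (s + t) = (P s).comp (P t))
    (D : Submodule ℝ H)
    (hPD : ∀ t : ℝ, 0 ≤ t → ∀ f ∈ D, P t f ∈ D)
    (L : H →ₗ[ℝ] H)
    (hderiv : ∀ f ∈ D, ∀ t : ℝ, 0 ≤ t →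
      HasDerivWithinAt (fun s => P s f) (L (P t f)) (Set.Ici 0) t)
    (hcont : ∀ f ∈ D, ContinuousOn (fun t => ⟪P t f, L (P t f)⟫) (Set.Ici 0))
    (T ν : ℝ) (hT : 0 < T) (hν : 0 < ν)
    (hdecay : ∀ f ∈ D, ∀ t : ℝ, 0 ≤ t →
      ∫ s in t..(t + T), ‖P s f‖ ^ 2 ≤
        Real.exp (-2 * ν * t) * ∫ s in (0:ℝ)..T, ‖P s f‖ ^ 2) :
    ∀ f ∈ D,
      ∫ t in (0:ℝ)..T, ‖P t f‖ ^ 2 ≤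
        (1 / ν) * ∫ t in (0:ℝ)..T, ⟪P t f, -(L (P t f))⟫ := by
  intro f hf
  set u : ℝ → H := fun s => P s f with hu_def
  have hucont : ContinuousOn u (Ici 0) := fun t ht =>
    (hderiv f hf t ht).continuousWithinAt
  set g : ℝ → ℝ := fun s => ‖u (max s 0)‖ ^ 2 with hg_def
  have hgcont : Continuous g := by
    have h1 : Continuous fun s : ℝ => u (max s 0) :=
      hucont.comp_continuous (continuous_id.max continuous_const)
        (fun x => le_max_right x 0)
    exact h1.norm.pow 2
  have hgeq : ∀ s : ℝ, 0 ≤ s → g s = ‖P s f‖ ^ 2 := by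
    intro s hs; simp [hg_def, hu_def, max_eq_left hs]
  have hgint : ∀ a b : ℝ, IntervalIntegrable g volume a b :=
    fun a b => hgcont.intervalIntegrable a b
  set A : ℝ := ∫ s in (0:ℝ)..T, g s with hA
  have hA' : A = ∫ s in (0:ℝ)..T, ‖P s f‖ ^ 2 := by
    apply intervalIntegral.integral_congr
    intro s hs
    rw [uIcc_of_le hT.le] at hs
    exact hgeq s hs.1
  set G : ℝ → ℝ := fun t => ∫ s in t..(t + T), g s with hGdef
  have hGdecay : ∀ t : ℝ, 0 ≤ t → G t ≤ Real.exp (-2 * ν * t) * A := by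
    intro t ht
    have h1 : G t = ∫ s in t..(t + T), ‖P s f‖ ^ 2 := by
      apply intervalIntegral.integral_congr
      intro s hs
      rw [uIcc_of_le (by linarith)] at hs
      exact hgeq s (le_trans ht hs.1)
    rw [h1, hA']
    exact hdecay f hf t ht
  have hF : ∀ x : ℝ, HasDerivAt (fun y => ∫ s in (0:ℝ)..y, g s) (g x) x := by
    intro x
    exact intervalIntegral.integral_hasDerivAt_right (hgint 0 x)
      (hgcont.stronglyMeasurableAtFilter _ _) hgcont.continuousAt
  have hGsplit : ∀ t : ℝ, G t = (∫ s in (0:ℝ)..(t + T), g s) - ∫ s in (0:ℝ)..t, g s := by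
    intro t
    have h := intervalIntegral.integral_add_adjacent_intervals (hgint 0 t) (hgint t (t + T))
    simp only [hGdef]
    linarith [h]
  have hGderiv : HasDerivAt G (g T - g 0) 0 := by
    have h1 : HasDerivAt (fun t : ℝ => ∫ s in (0:ℝ)..(t + T), g s) (g T) 0 := by
      have h0 : HasDerivAt (fun y => ∫ s in (0:ℝ)..y, g s) (g T) (id (0:ℝ) + T) := by
        simpa using hF T
      have := h0.comp 0 ((hasDerivAt_id (0:ℝ)).add_const T)
      simpa [Function.comp_def] using this
    have h2 := h1.sub (hF 0)
    have : G = fun t => (∫ s in (0:ℝ)..(t + T), g s) - ∫ s in (0:ℝ)..t, g s :=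
      funext hGsplit
    rw [this]
    exact h2
  have hφderiv : HasDerivAt (fun t : ℝ => Real.exp (-2 * ν * t) * A) (-2 * ν * A) 0 := by
    have h1 : HasDerivAt (fun t : ℝ => -2 * ν * t) (-2 * ν) 0 := by
      simpa using (hasDerivAt_id (0:ℝ)).const_mul (-2 * ν)
    have h2 := (h1.exp).mul_const A
    simpa using h2
  have hset : Ici (0:ℝ) \ {0} = Ioi 0 := by
    ext x; simp [lt_iff_le_and_ne, eq_comm]
  have hslopeG : Filter.Tendsto (slope G 0) (nhdsWithin 0 (Ioi 0)) (nhds (g T - g 0)) := by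
    have h := (hGderiv.hasDerivWithinAt (s := Ici 0))
    rw [hasDerivWithinAt_iff_tendsto_slope] at h
    rwa [hset] at h
  have hslopeφ : Filter.Tendsto (slope (fun t : ℝ => Real.exp (-2 * ν * t) * A) 0)
      (nhdsWithin 0 (Ioi 0)) (nhds (-2 * ν * A)) := by
    have h := (hφderiv.hasDerivWithinAt (s := Ici 0))
    rw [hasDerivWithinAt_iff_tendsto_slope] at h
    rwa [hset] at h
  have hG0 : G 0 = A := by simp [hGdef, hA]
  have hslope_le : ∀ᶠ t in nhdsWithin 0 (Ioi (0:ℝ)),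
      slope G 0 t ≤ slope (fun t : ℝ => Real.exp (-2 * ν * t) * A) 0 t := by
    filter_upwards [self_mem_nhdsWithin] with t ht
    have ht0 : (0:ℝ) < t := ht
    rw [slope_def_field, slope_def_field]
    have h1 : G t ≤ Real.exp (-2 * ν * t) * A := hGdecay t ht0.le
    have h2 : (Real.exp (-2 * ν * 0) * A) = A := by simp
    rw [hG0, h2]
    gcongr
  have hkey1 : g T - g 0 ≤ -2 * ν * A :=
    le_of_tendsto_of_tendsto hslopeG hslopeφ hslope_le
  -- FTC-2
  have hinncont : ContinuousOn (fun t => ⟪P t f, L (P t f)⟫) (Icc 0 T) :=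
    (hcont f hf).mono (Icc_subset_Ici_self)
  have hkey2 : ∫ t in (0:ℝ)..T, 2 * ⟪P t f, L (P t f)⟫ = g T - g 0 := by
    apply intervalIntegral.integral_eq_sub_of_hasDeriv_right_of_le hT.le
      hgcont.continuousOn
    · intro x hx
      have hx0 : (0:ℝ) < x := hx.1
      have hu' : HasDerivAt u (L (u x)) x :=
        (hderiv f hf x hx0.le).hasDerivAt (Ici_mem_nhds hx0)
      have hinner : HasDerivAt (fun t => ⟪u t, u t⟫)
          (⟪u x, L (u x)⟫ + ⟪L (u x), u x⟫) x := hu'.inner ℝ hu'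
      have heq : (fun t => ⟪u t, u t⟫) =ᶠ[nhds x] g := by
        filter_upwards [Ioi_mem_nhds hx0] with t ht
        have : max t 0 = t := max_eq_left (le_of_lt ht)
        simp [hg_def, this, real_inner_self_eq_norm_sq]
      have hg' : HasDerivAt g (⟪u x, L (u x)⟫ + ⟪L (u x), u x⟫) x :=
        hinner.congr_of_eventuallyEq heq.symm
      have : (⟪u x, L (u x)⟫ + ⟪L (u x), u x⟫) = 2 * ⟪P x f, L (P x f)⟫ := by
        rw [real_inner_comm (L (u x)) (u x)]; simp [hu_def]; ring
      rw [this] at hg'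
      exact hg'.hasDerivWithinAt
    · apply ContinuousOn.intervalIntegrable
      rw [uIcc_of_le hT.le]
      exact continuousOn_const.mul hinncont
  have hint2 : IntervalIntegrable (fun t => ⟪P t f, L (P t f)⟫) volume 0 T := by
    apply ContinuousOn.intervalIntegrable
    rw [uIcc_of_le hT.le]
    exact hinncont
  have hkey3 : 2 * ∫ t in (0:ℝ)..T, ⟪P t f, L (P t f)⟫ = g T - g 0 := by
    rw [← hkey2, ← intervalIntegral.integral_const_mul]
  have hRHS : (∫ t in (0:ℝ)..T, ⟪P t f, -(L (P t f))⟫)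
      = - ∫ t in (0:ℝ)..T, ⟪P t f, L (P t f)⟫ := by
    rw [← intervalIntegral.integral_neg]
    congr 1; funext t; rw [inner_neg_right]
  rw [hRHS, ← hA']
  have h1 : ν * A ≤ - ∫ t in (0:ℝ)..T, ⟪P t f, L (P t f)⟫ := by linarith [hkey1, hkey3]
  rw [div_mul_eq_mul_div, le_div_iff₀ hν, one_mul]
  linarith [h1]
end

section
/- (Poincaré inequality for sticky Brownian motion.) There exists a universal constant C > 0 such that for all ω, L > 0 and all f ∈ C¹([0,L]): Var_μ(f) ≤ C · ((ωL + (ωL)²)/ω²) · (ω/(2+ωL)) · ∫₀ᴸ f′(x)² dx. -/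
open MeasureTheory Set

/-- The invariant probability measure of sticky Brownian motion on `[0, L]` with parameter `ω`:
`μ = (2 + ωL)⁻¹ (δ₀ + ω·λ_{[0,L]} + δ_L)`. -/
noncomputable def stickyMeasure (ω L : ℝ) : Measure ℝ :=
  (ENNReal.ofReal (2 + ω * L))⁻¹ •
    (Measure.dirac 0 + ENNReal.ofReal ω • volume.restrict (Icc 0 L) + Measure.dirac L)

-- Cauchy-Schwarz for finite measures
lemma cs_integral {μ : Measure ℝ} [IsFiniteMeasure μ] {g : ℝ → ℝ}
    (hg : Integrable g μ) (hg2 : Integrable (fun x => g x ^ 2) μ) :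
    (∫ x, g x ∂μ) ^ 2 ≤ (μ Set.univ).toReal * ∫ x, g x ^ 2 ∂μ := by
  set m := (μ Set.univ).toReal with hm
  have hm0 : 0 ≤ m := ENNReal.toReal_nonneg
  set I := ∫ x, g x ∂μ with hI
  have key : 0 ≤ ∫ x, (m * g x - I) ^ 2 ∂μ := integral_nonneg fun x => sq_nonneg _
  have expand : ∫ x, (m * g x - I) ^ 2 ∂μ
      = m ^ 2 * (∫ x, g x ^ 2 ∂μ) - 2 * m * I * I + I ^ 2 * m := by
    have h1 : (fun x => (m * g x - I) ^ 2)
        = fun x => m ^ 2 * g x ^ 2 - (2 * m * I) * g x + I ^ 2 :=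
      funext fun x => by ring
    have i1 : Integrable (fun x => m ^ 2 * g x ^ 2 - 2 * m * I * g x) μ :=
      (hg2.const_mul _).sub (hg.const_mul _)
    rw [h1, integral_add i1 (integrable_const _),
      integral_sub (hg2.const_mul _) (hg.const_mul _), integral_const_mul, integral_const_mul,
      integral_const]
    simp [hm, hI, smul_eq_mul, mul_comm, measureReal_def]
  rcases eq_or_lt_of_le hm0 with h0 | hpos
  · have hμ0 : μ = 0 := by
      have := (ENNReal.toReal_eq_zero_iff _).1 h0.symm
      rcases this with h | h
      · exact Measure.measure_univ_eq_zero.mp h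
      · exact absurd h (measure_ne_top μ _)
    simp [hI, hμ0]
  · have key2 : m * I ^ 2 ≤ m * (m * ∫ x, g x ^ 2 ∂μ) := by nlinarith [key, expand]
    exact le_of_mul_le_mul_left key2 hpos

lemma var_le {ν : Measure ℝ} [IsProbabilityMeasure ν] {g : ℝ → ℝ}
    (hg : Integrable g ν) (hg2 : Integrable (fun x => g x ^ 2) ν) (c : ℝ) :
    ∫ x, g x ^ 2 ∂ν - (∫ x, g x ∂ν) ^ 2 ≤ ∫ x, (g x - c) ^ 2 ∂ν := by
  have h1 : (fun x => (g x - c) ^ 2) = fun x => g x ^ 2 - (2 * c) * g x + c ^ 2 :=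
    funext fun x => by ring
  have i1 : Integrable (fun x => g x ^ 2 - 2 * c * g x) ν := hg2.sub (hg.const_mul _)
  rw [h1, integral_add i1 (integrable_const _),
    integral_sub hg2 (hg.const_mul _), integral_const_mul, integral_const]
  simp only [measureReal_def, measure_univ, ENNReal.toReal_one, one_smul]
  nlinarith [sq_nonneg ((∫ x, g x ∂ν) - c)]

lemma sticky_prob {ω L : ℝ} (hω : 0 < ω) (hL : 0 < L) :
    IsProbabilityMeasure (stickyMeasure ω L) := by
  constructor
  rw [stickyMeasure, Measure.smul_apply, Measure.add_apply, Measure.add_apply,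
    Measure.smul_apply, Measure.restrict_apply_univ, Real.volume_Icc,
    Measure.dirac_apply_of_mem (mem_univ _), Measure.dirac_apply_of_mem (mem_univ _)]
  have h1 : (1 : ENNReal) + ENNReal.ofReal ω • ENNReal.ofReal (L - 0) + 1
      = ENNReal.ofReal (2 + ω * L) := by
    rw [sub_zero, smul_eq_mul, ← ENNReal.ofReal_mul hω.le,
      ENNReal.ofReal_add (by norm_num) (by positivity)]
    norm_num
    ring
  rw [h1, smul_eq_mul, ENNReal.inv_mul_cancel]
  · simp [ENNReal.ofReal_eq_zero]; positivity
  · exact ENNReal.ofReal_ne_top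

lemma sticky_ae {ω L : ℝ} (hω : 0 < ω) (hL : 0 < L) :
    ∀ᵐ x ∂(stickyMeasure ω L), x ∈ Icc (0:ℝ) L := by
  rw [ae_iff]
  have h : {x : ℝ | ¬x ∈ Icc (0:ℝ) L} = (Icc (0:ℝ) L)ᶜ := rfl
  rw [h, stickyMeasure, Measure.smul_apply, Measure.add_apply, Measure.add_apply,
    Measure.smul_apply, Measure.restrict_apply measurableSet_Icc.compl,
    Measure.dirac_apply' _ measurableSet_Icc.compl,
    Measure.dirac_apply' _ measurableSet_Icc.compl]
  simp [Set.indicator, hL.le]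

lemma pointwise_bound {L : ℝ} (hL : 0 < L) {f f' : ℝ → ℝ}
    (hf : ∀ x ∈ Icc (0:ℝ) L, HasDerivWithinAt f (f' x) (Icc (0:ℝ) L) x)
    (hf' : ContinuousOn f' (Icc (0:ℝ) L)) {x : ℝ} (hx : x ∈ Icc (0:ℝ) L) :
    (f x - f 0) ^ 2 ≤ L * ∫ t in (0:ℝ)..L, (f' t) ^ 2 := by
  obtain ⟨hx0, hxL⟩ := hx
  have hsub : Icc (0:ℝ) x ⊆ Icc 0 L := Icc_subset_Icc le_rfl hxL
  have hfc : ContinuousOn f (Icc (0:ℝ) L) := fun t ht => (hf t ht).continuousWithinAt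
  have hint : IntervalIntegrable f' volume 0 x := by
    apply ContinuousOn.intervalIntegrable
    rw [uIcc_of_le hx0]
    exact hf'.mono hsub
  have ftc : ∫ t in (0:ℝ)..x, f' t = f x - f 0 := by
    apply intervalIntegral.integral_eq_sub_of_hasDeriv_right_of_le hx0 (hfc.mono hsub) _ hint
    intro t ht
    have htL : t ∈ Icc (0:ℝ) L := ⟨ht.1.le, (ht.2.trans_le hxL).le⟩
    exact ((hf t htL).hasDerivAt (Icc_mem_nhds ht.1 (ht.2.trans_le hxL))).hasDerivWithinAt
  -- Cauchy-Schwarz on [0, x]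
  haveI : IsFiniteMeasure (volume.restrict (Ioc (0:ℝ) x)) :=
    ⟨by rw [Measure.restrict_apply_univ]; exact measure_Ioc_lt_top⟩
  have hint1 : IntegrableOn f' (Ioc 0 x) volume :=
    ((hf'.mono hsub).integrableOn_Icc).mono_set Ioc_subset_Icc_self
  have hint2 : IntegrableOn (fun t => (f' t) ^ 2) (Ioc 0 x) volume :=
    (((hf'.mono hsub).pow 2).integrableOn_Icc).mono_set Ioc_subset_Icc_self
  have cs : (∫ t in Ioc (0:ℝ) x, f' t) ^ 2
      ≤ x * ∫ t in Ioc (0:ℝ) x, (f' t) ^ 2 := by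
    have := cs_integral (μ := volume.restrict (Ioc (0:ℝ) x)) hint1 hint2
    rwa [Measure.restrict_apply_univ, Real.volume_Ioc, sub_zero,
      ENNReal.toReal_ofReal hx0] at this
  have mono : ∫ t in Ioc (0:ℝ) x, (f' t) ^ 2 ≤ ∫ t in Ioc (0:ℝ) L, (f' t) ^ 2 := by
    apply setIntegral_mono_set
    · exact (hf'.pow 2).integrableOn_Icc.mono_set Ioc_subset_Icc_self
    · exact Filter.Eventually.of_forall fun t => sq_nonneg _
    · exact HasSubset.Subset.eventuallyLE (Ioc_subset_Ioc_right hxL)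
  have hnn : (0:ℝ) ≤ ∫ t in Ioc (0:ℝ) x, (f' t) ^ 2 :=
    setIntegral_nonneg measurableSet_Ioc fun t _ => sq_nonneg _
  rw [← ftc, intervalIntegral.integral_of_le hx0]
  rw [intervalIntegral.integral_of_le hL.le]
  nlinarith

/-- **Poincaré inequality for sticky Brownian motion.** There is a universal constant `C > 0`
such that for all `ω, L > 0` and all `f ∈ C¹([0, L])` (with derivative `f'` on `[0, L]`),
`Var_μ(f) ≤ C ((ωL + (ωL)²)/ω²) · (ω/(2 + ωL)) ∫₀ᴸ f'(x)² dx`,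
where `(ω/(2+ωL)) ∫₀ᴸ (f')² = ⟨f, -𝓛 f⟩_{L²(μ)}` is the Dirichlet form. -/
theorem stmt_6 :
    ∃ C : ℝ, 0 < C ∧
      ∀ ω L : ℝ, 0 < ω → 0 < L →
      ∀ f f' : ℝ → ℝ,
        (∀ x ∈ Icc (0:ℝ) L, HasDerivWithinAt f (f' x) (Icc (0:ℝ) L) x) →
        ContinuousOn f' (Icc (0:ℝ) L) →
        (∫ x, (f x) ^ 2 ∂(stickyMeasure ω L)) - (∫ x, f x ∂(stickyMeasure ω L)) ^ 2 ≤
          C * ((ω * L + (ω * L) ^ 2) / ω ^ 2) * (ω / (2 + ω * L)) *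
            ∫ x in (0:ℝ)..L, (f' x) ^ 2 := by
  refine ⟨2, by norm_num, ?_⟩
  intro ω L hω hL f f' hf hf'
  haveI := sticky_prob hω hL
  set ν := stickyMeasure ω L with hν
  have hae : ∀ᵐ x ∂ν, x ∈ Icc (0:ℝ) L := sticky_ae hω hL
  have hfc : ContinuousOn f (Icc (0:ℝ) L) := fun t ht => (hf t ht).continuousWithinAt
  set g : ℝ → ℝ := fun x => f (max 0 (min x L)) with hgdef
  have hclamp : ∀ x : ℝ, max 0 (min x L) ∈ Icc (0:ℝ) L :=
    fun x => ⟨le_max_left _ _, max_le hL.le (min_le_right _ _)⟩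
  have hgc : Continuous g :=
    hfc.comp_continuous (continuous_const.max (continuous_id.min continuous_const)) hclamp
  have hgeq : ∀ x ∈ Icc (0:ℝ) L, g x = f x := by
    intro x hx
    simp only [hgdef]
    rw [min_eq_left hx.2, max_eq_right hx.1]
  have hgae : g =ᵐ[ν] f := hae.mono fun x hx => hgeq x hx
  obtain ⟨M, hM⟩ := isCompact_Icc.exists_bound_of_continuousOn hfc
  have hgb : ∀ x, ‖g x‖ ≤ M := fun x => hM _ (hclamp x)
  have hg_int : Integrable g ν :=
    (integrable_const M).mono' hgc.aestronglyMeasurable (Filter.Eventually.of_forall hgb)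
  have hg2_int : Integrable (fun x => g x ^ 2) ν := by
    refine (integrable_const (M ^ 2)).mono' (hgc.pow 2).aestronglyMeasurable
      (Filter.Eventually.of_forall fun x => ?_)
    rw [Real.norm_eq_abs, abs_pow]
    exact pow_le_pow_left₀ (abs_nonneg _) (hgb x) 2
  set J := ∫ x in (0:ℝ)..L, (f' x) ^ 2 with hJdef
  have hJ : 0 ≤ J := intervalIntegral.integral_nonneg hL.le fun t _ => sq_nonneg _
  have hgae2 : (fun x => g x ^ 2) =ᵐ[ν] fun x => f x ^ 2 :=
    hgae.mono fun x hx => by simp only [hx]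
  have e1 : ∫ x, (f x) ^ 2 ∂ν = ∫ x, g x ^ 2 ∂ν := (integral_congr_ae hgae2).symm
  have e2 : ∫ x, f x ∂ν = ∫ x, g x ∂ν := (integral_congr_ae hgae).symm
  have step2 := var_le hg_int hg2_int (g 0)
  have int3 : Integrable (fun x => (g x - g 0) ^ 2) ν := by
    refine (integrable_const ((2 * M) ^ 2)).mono'
      ((hgc.sub continuous_const).pow 2).aestronglyMeasurable
      (Filter.Eventually.of_forall fun x => ?_)
    have h1 := abs_le.1 (hgb x)
    have h2 := abs_le.1 (hgb 0)
    rw [Real.norm_eq_abs, abs_pow, sq_abs]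
    nlinarith [h1.1, h1.2, h2.1, h2.2]
  have step3 : ∫ x, (g x - g 0) ^ 2 ∂ν ≤ L * J := by
    have hb : ∀ᵐ x ∂ν, (g x - g 0) ^ 2 ≤ L * J := by
      filter_upwards [hae] with x hx
      rw [hgeq x hx, hgeq 0 ⟨le_rfl, hL.le⟩]
      exact pointwise_bound hL hf hf' hx
    calc ∫ x, (g x - g 0) ^ 2 ∂ν ≤ ∫ _x, L * J ∂ν := integral_mono_ae int3 (integrable_const _) hb
      _ = L * J := by simp
  have halg : L ≤ 2 * ((ω * L + (ω * L) ^ 2) / ω ^ 2) * (ω / (2 + ω * L)) := by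
    have h2 : (0:ℝ) < 2 + ω * L := by positivity
    have e : 2 * ((ω * L + (ω * L) ^ 2) / ω ^ 2) * (ω / (2 + ω * L))
        = 2 * L * (1 + ω * L) / (2 + ω * L) := by
      field_simp
    rw [e, le_div_iff₀ h2]
    nlinarith
  calc (∫ x, (f x) ^ 2 ∂ν) - (∫ x, f x ∂ν) ^ 2
      = (∫ x, g x ^ 2 ∂ν) - (∫ x, g x ∂ν) ^ 2 := by rw [e1, e2]
    _ ≤ ∫ x, (g x - g 0) ^ 2 ∂ν := step2
    _ ≤ L * J := step3
    _ ≤ 2 * ((ω * L + (ω * L) ^ 2) / ω ^ 2) * (ω / (2 + ω * L)) * J :=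
        mul_le_mul_of_nonneg_right halg hJ
end

section
/- For every f ∈ C¹([0,L]) the variance decomposition identity holds: Var_μ(f) = (ωL/(2+ωL)) · Var_𝒰(f) + (1/(2(2+ωL))) · (∫₀ᴸ f′(x) dx)² + (2ωL/(2+ωL)²) · (∫₀ᴸ f′(x) · ((x − L/2)/L) dx)², where 𝒰 is the uniform distribution on [0,L] and Var_𝒰(f) = (1/L)∫₀ᴸ f² dx − ((1/L)∫₀ᴸ f dx)². -/
open MeasureTheory Set

lemma sticky_integral (ω L : ℝ) (hω : 0 < ω) (hL : 0 < L) (g : ℝ → ℝ)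
    (hg : ContinuousOn g (Icc 0 L)) :
    ∫ x, g x ∂(stickyMeasure ω L)
      = (2 + ω * L)⁻¹ * (g 0 + ω * (∫ x in (0:ℝ)..L, g x) + g L) := by
  have hpos : (0:ℝ) < 2 + ω * L := by positivity
  have hint : IntegrableOn g (Icc 0 L) volume := hg.integrableOn_Icc
  have hd0 : Integrable g (Measure.dirac (0:ℝ)) :=
    (integrable_const (g 0)).congr (ae_eq_dirac g).symm
  have hdL : Integrable g (Measure.dirac L) :=
    (integrable_const (g L)).congr (ae_eq_dirac g).symm
  rw [stickyMeasure, integral_smul_measure, integral_add_measure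
      (hd0.add_measure (hint.smul_measure ENNReal.ofReal_ne_top)) hdL,
    integral_add_measure hd0 (hint.smul_measure ENNReal.ofReal_ne_top),
    integral_smul_measure, integral_dirac, integral_dirac,
    ENNReal.toReal_inv, ENNReal.toReal_ofReal hpos.le, ENNReal.toReal_ofReal hω.le]
  rw [intervalIntegral.integral_of_le hL.le, ← integral_Icc_eq_integral_Ioc,
    smul_eq_mul, smul_eq_mul]

lemma sticky_ftc (L : ℝ) (hL : 0 < L) (g g' : ℝ → ℝ)
    (hg : ∀ x ∈ Icc (0:ℝ) L, HasDerivWithinAt g (g' x) (Icc (0:ℝ) L) x)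
    (hg' : ContinuousOn g' (Icc (0:ℝ) L)) :
    ∫ x in (0:ℝ)..L, g' x = g L - g 0 := by
  apply intervalIntegral.integral_eq_sub_of_hasDeriv_right_of_le hL.le
    (fun x hx => (hg x hx).continuousWithinAt)
    (fun x hx => ((hg x (Ioo_subset_Icc_self hx)).hasDerivAt
      (Icc_mem_nhds hx.1 hx.2)).hasDerivWithinAt)
  exact (by rwa [uIcc_of_le hL.le] : ContinuousOn g' (uIcc 0 L)).intervalIntegrable

/-- **Variance decomposition identity for the sticky measure.** For every `f ∈ C¹([0, L])`
(with derivative `f'` on `[0, L]`),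
`Var_μ(f) = (ωL/(2+ωL)) Var_𝒰(f) + (1/(2(2+ωL))) (∫₀ᴸ f')² + (2ωL/(2+ωL)²) (∫₀ᴸ f'(x) (x - L/2)/L dx)²`,
where `𝒰` is the uniform distribution on `[0, L]`. -/
theorem stmt_7 (ω L : ℝ) (hω : 0 < ω) (hL : 0 < L)
    (f f' : ℝ → ℝ)
    (hf : ∀ x ∈ Icc (0:ℝ) L, HasDerivWithinAt f (f' x) (Icc (0:ℝ) L) x)
    (hf' : ContinuousOn f' (Icc (0:ℝ) L)) :
    (∫ x, (f x) ^ 2 ∂(stickyMeasure ω L)) - (∫ x, f x ∂(stickyMeasure ω L)) ^ 2 =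
      (ω * L / (2 + ω * L)) *
          ((1 / L) * (∫ x in (0:ℝ)..L, (f x) ^ 2) - ((1 / L) * ∫ x in (0:ℝ)..L, f x) ^ 2) +
        (1 / (2 * (2 + ω * L))) * (∫ x in (0:ℝ)..L, f' x) ^ 2 +
        (2 * ω * L / (2 + ω * L) ^ 2) *
          (∫ x in (0:ℝ)..L, f' x * ((x - L / 2) / L)) ^ 2 := by
  have hpos : (0:ℝ) < 2 + ω * L := by positivity
  have hfc : ContinuousOn f (Icc 0 L) := fun x hx => (hf x hx).continuousWithinAt
  have h1 : ∫ x, f x ∂(stickyMeasure ω L)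
      = (2 + ω * L)⁻¹ * (f 0 + ω * (∫ x in (0:ℝ)..L, f x) + f L) :=
    sticky_integral ω L hω hL f hfc
  have h2 : ∫ x, (f x) ^ 2 ∂(stickyMeasure ω L)
      = (2 + ω * L)⁻¹ * ((f 0) ^ 2 + ω * (∫ x in (0:ℝ)..L, (f x) ^ 2) + (f L) ^ 2) :=
    sticky_integral ω L hω hL (fun x => (f x) ^ 2) (hfc.pow 2)
  have h3 : ∫ x in (0:ℝ)..L, f' x = f L - f 0 := sticky_ftc L hL f f' hf hf'
  -- integration by parts for the third integral
  have hg : ∀ x ∈ Icc (0:ℝ) L, HasDerivWithinAt (fun x => f x * (x - L / 2))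
      (f' x * (x - L / 2) + f x * 1) (Icc (0:ℝ) L) x := by
    intro x hx
    exact (hf x hx).mul (((hasDerivAt_id x).sub_const (L / 2)).hasDerivWithinAt)
  have hgc : ContinuousOn (fun x => f' x * (x - L / 2) + f x * 1) (Icc (0:ℝ) L) := by
    exact (hf'.mul ((continuousOn_id.sub continuousOn_const))).add (hfc.mul continuousOn_const)
  have h4 : ∫ x in (0:ℝ)..L, (f' x * (x - L / 2) + f x * 1)
      = f L * (L - L / 2) - f 0 * (0 - L / 2) :=
    sticky_ftc L hL (fun x => f x * (x - L / 2)) _ hg hgc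
  have hint1 : IntervalIntegrable (fun x => f' x * (x - L / 2) + f x * 1) volume 0 L :=
    (by rwa [uIcc_of_le hL.le] :
      ContinuousOn (fun x => f' x * (x - L / 2) + f x * 1) (uIcc 0 L)).intervalIntegrable
  have hint2 : IntervalIntegrable (fun x => f x * 1) volume 0 L := by
    have : ContinuousOn (fun x => f x * 1) (uIcc 0 L) := by
      rw [uIcc_of_le hL.le]; exact hfc.mul continuousOn_const
    exact this.intervalIntegrable
  have h5 : ∫ x in (0:ℝ)..L, f' x * (x - L / 2)
      = (f L * (L - L / 2) - f 0 * (0 - L / 2)) - ∫ x in (0:ℝ)..L, f x := by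
    have := intervalIntegral.integral_sub hint1 hint2
    simp only [add_sub_cancel_right] at this
    rw [this, h4]
    simp
  have h6 : ∫ x in (0:ℝ)..L, f' x * ((x - L / 2) / L)
      = (∫ x in (0:ℝ)..L, f' x * (x - L / 2)) * L⁻¹ := by
    rw [← intervalIntegral.integral_mul_const]
    congr 1; funext x; ring
  rw [h1, h2, h3, h6, h5]
  have hLne : L ≠ 0 := hL.ne'
  have hne : (2 + ω * L) ≠ 0 := hpos.ne'
  field_simp
  ring
end

section
/- (The jamming RTP process is a second-order lift of sticky Brownian motion.) Let f, g ∈ C²([0,L]) satisfy the sticky boundary conditions f″(0) = ω f′(0), f″(L) = −ω f′(L), g″(0) = ω g′(0), g″(L) = −ω g′(L). Define F, G : [0,L] × {−2,0,+2} → ℝ by F(x,v) = v·1_{(0,L)}(x)·f′(x) and G(x,v) = v·1_{(0,L)}(x)·g′(x), and let π(x,v) = x. Then the first-order lift condition ∫ F · (g∘π) dμ̂ = 0 holds, and the second-order lift condition (1/2) ∫ F · G dμ̂ = −∫_{[0,L]} f″ · g dμ holds; equivalently, (ω/(2+ωL)) ∫₀ᴸ f′(x) g′(x) dx = −(1/(2+ωL))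 (f″(0)g(0) + f″(L)g(L)) − (ω/(2+ωL)) ∫₀ᴸ f″(x) g(x) dx. -/
open MeasureTheory Set

/-- A component measure `d⁰ δ₀ + a λ_{[0,L]} + d^L δ_L` of the invariant measure of the
jamming run-and-tumble process. -/
noncomputable def rtpComponent (d0 a dL L : ℝ) : Measure ℝ :=
  ENNReal.ofReal d0 • Measure.dirac 0 + ENNReal.ofReal a • volume.restrict (Icc 0 L) +
    ENNReal.ofReal dL • Measure.dirac L


lemma aux_integrable_dirac (h : ℝ → ℝ) (a : ℝ) : Integrable h (Measure.dirac a) := by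
  have he : h =ᵐ[Measure.dirac a] fun _ => h a := by
    rw [Filter.EventuallyEq, ae_dirac_eq]
    exact Filter.eventually_pure.2 rfl
  exact (integrable_const (h a)).congr he.symm

lemma aux_rtp_integrable (d0 a dL L : ℝ) (u : ℝ → ℝ)
    (hu : Integrable u (volume.restrict (Icc 0 L))) :
    Integrable u (rtpComponent d0 a dL L) := by
  rw [rtpComponent]
  exact (((aux_integrable_dirac u 0).smul_measure ENNReal.ofReal_ne_top).add_measure
      (hu.smul_measure ENNReal.ofReal_ne_top)).add_measure
    ((aux_integrable_dirac u L).smul_measure ENNReal.ofReal_ne_top)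

lemma aux_rtp_integral (d0 a dL L : ℝ) (hd0 : 0 ≤ d0) (ha : 0 ≤ a) (hdL : 0 ≤ dL)
    (u : ℝ → ℝ) (hu : Integrable u (volume.restrict (Icc 0 L))) :
    ∫ x, u x ∂(rtpComponent d0 a dL L) =
      d0 * u 0 + a * (∫ x in Icc 0 L, u x) + dL * u L := by
  have h1 : Integrable u (ENNReal.ofReal d0 • Measure.dirac (0:ℝ)) :=
    (aux_integrable_dirac u 0).smul_measure ENNReal.ofReal_ne_top
  have h2 : Integrable u (ENNReal.ofReal a • volume.restrict (Icc 0 L)) :=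
    hu.smul_measure ENNReal.ofReal_ne_top
  have h3 : Integrable u (ENNReal.ofReal dL • Measure.dirac L) :=
    (aux_integrable_dirac u L).smul_measure ENNReal.ofReal_ne_top
  rw [rtpComponent, integral_add_measure (h1.add_measure h2) h3, integral_add_measure h1 h2,
    integral_smul_measure, integral_smul_measure, integral_smul_measure,
    integral_dirac, integral_dirac, ENNReal.toReal_ofReal hd0, ENNReal.toReal_ofReal ha,
    ENNReal.toReal_ofReal hdL]
  simp [smul_eq_mul]

lemma aux_ind_meas {L : ℝ} {u : ℝ → ℝ} (hu : ContinuousOn u (Icc 0 L)) :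
    Measurable ((Ioo (0:ℝ) L).indicator u) := by
  rw [← Set.piecewise_eq_indicator]
  exact ContinuousOn.measurable_piecewise
    (hu.mono Ioo_subset_Icc_self) continuous_const.continuousOn measurableSet_Ioo

lemma aux_ind_intOn {L : ℝ} {u : ℝ → ℝ} (hu : ContinuousOn u (Icc 0 L)) :
    Integrable ((Ioo (0:ℝ) L).indicator u) (volume.restrict (Icc 0 L)) :=
  (((hu.integrableOn_compact isCompact_Icc).mono_set
    Ioo_subset_Icc_self).integrable_indicator measurableSet_Ioo).integrableOn

lemma aux_comp_integrable (v d0 a dL L : ℝ) (u : ℝ → ℝ)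
    (hu : ContinuousOn u (Icc 0 L)) (q : ℝ → ℝ) (hq : Measurable q) :
    Integrable (fun p : ℝ × ℝ => q p.2 * (Ioo (0:ℝ) L).indicator u p.1)
      (Measure.map (fun x : ℝ => (x, v)) (rtpComponent d0 a dL L)) := by
  have hm : Measurable fun p : ℝ × ℝ => q p.2 * (Ioo (0:ℝ) L).indicator u p.1 :=
    (hq.comp measurable_snd).mul ((aux_ind_meas hu).comp measurable_fst)
  have hφ : Measurable fun x : ℝ => (x, v) := measurable_id.prodMk measurable_const
  rw [integrable_map_measure hm.aestronglyMeasurable hφ.aemeasurable]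
  exact aux_rtp_integrable d0 a dL L _ ((aux_ind_intOn hu).const_mul (q v))

lemma aux_comp_integral (v d0 a dL L : ℝ) (hd0 : 0 ≤ d0) (ha : 0 ≤ a) (hdL : 0 ≤ dL)
    (u : ℝ → ℝ) (hu : ContinuousOn u (Icc 0 L)) (q : ℝ → ℝ) (hq : Measurable q) :
    ∫ p, q p.2 * (Ioo (0:ℝ) L).indicator u p.1
        ∂(Measure.map (fun x : ℝ => (x, v)) (rtpComponent d0 a dL L))
      = q v * (a * ∫ x in Ioo (0:ℝ) L, u x) := by
  have hm : Measurable fun p : ℝ × ℝ => q p.2 * (Ioo (0:ℝ) L).indicator u p.1 :=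
    (hq.comp measurable_snd).mul ((aux_ind_meas hu).comp measurable_fst)
  have hφ : Measurable fun x : ℝ => (x, v) := measurable_id.prodMk measurable_const
  rw [integral_map_of_stronglyMeasurable hφ hm.stronglyMeasurable]
  rw [aux_rtp_integral d0 a dL L hd0 ha hdL _ ((aux_ind_intOn hu).const_mul (q v))]
  rw [integral_const_mul, integral_indicator measurableSet_Ioo,
    Measure.restrict_restrict measurableSet_Ioo,
    inter_eq_self_of_subset_left Ioo_subset_Icc_self]
  have h0 : (Ioo (0:ℝ) L).indicator u 0 = 0 :=
    indicator_of_notMem (fun h => lt_irrefl 0 h.1) u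
  have hLL : (Ioo (0:ℝ) L).indicator u L = 0 :=
    indicator_of_notMem (fun h => lt_irrefl L h.2) u
  rw [h0, hLL]; ring

lemma aux_sticky_integral (ω L : ℝ) (hω : 0 ≤ ω) (hL : 0 ≤ L) (u : ℝ → ℝ)
    (hu : ContinuousOn u (Icc 0 L)) :
    ∫ x, u x ∂(stickyMeasure ω L) =
      (2 + ω * L)⁻¹ * (u 0 + ω * (∫ x in Icc 0 L, u x) + u L) := by
  have hInt : Integrable u (volume.restrict (Icc 0 L)) :=
    hu.integrableOn_compact isCompact_Icc
  have hc : (0:ℝ) ≤ 2 + ω * L := by nlinarith [mul_nonneg hω hL]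
  rw [stickyMeasure, integral_smul_measure,
    integral_add_measure ((aux_integrable_dirac u 0).add_measure
      (hInt.smul_measure ENNReal.ofReal_ne_top)) (aux_integrable_dirac u L),
    integral_add_measure (aux_integrable_dirac u 0) (hInt.smul_measure ENNReal.ofReal_ne_top),
    integral_smul_measure, integral_dirac, integral_dirac,
    ENNReal.toReal_inv, ENNReal.toReal_ofReal hc, ENNReal.toReal_ofReal hω]
  simp [smul_eq_mul]

lemma aux_Ioo_eq (L : ℝ) (hL : 0 ≤ L) (u : ℝ → ℝ) :
    ∫ x in Ioo (0:ℝ) L, u x = ∫ x in (0:ℝ)..L, u x := by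
  rw [intervalIntegral.integral_of_le hL, Measure.restrict_congr_set Ioo_ae_eq_Ioc]

lemma aux_Icc_eq (L : ℝ) (hL : 0 ≤ L) (u : ℝ → ℝ) :
    ∫ x in Icc (0:ℝ) L, u x = ∫ x in (0:ℝ)..L, u x := by
  rw [intervalIntegral.integral_of_le hL, Measure.restrict_congr_set Ioc_ae_eq_Icc]

/-- **The jamming RTP process is a second-order lift of sticky Brownian motion.**
Let `f, g ∈ C²([0,L])` satisfy the sticky boundary conditions `f''(0) = ω f'(0)`,
`f''(L) = -ω f'(L)` (and likewise for `g`), and set `F(x,v) = v 1_{(0,L)}(x) f'(x)`,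
`G(x,v) = v 1_{(0,L)}(x) g'(x)`, `π(x,v) = x`. Then the first-order lift condition
`∫ F (g ∘ π) dμ̂ = 0` and the second-order lift condition
`(1/2) ∫ F G dμ̂ = -∫ f'' g dμ` hold; equivalently,
`(ω/(2+ωL)) ∫₀ᴸ f' g' = -(1/(2+ωL))(f''(0)g(0) + f''(L)g(L)) - (ω/(2+ωL)) ∫₀ᴸ f'' g`. -/
theorem stmt_10 (ω L : ℝ) (hω : 0 < ω) (hL : 0 < L)
    (μhat : Measure (ℝ × ℝ))
    (hμhat : μhat =
      Measure.map (fun x : ℝ => (x, (2:ℝ)))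
          (rtpComponent 0 (ω / 4 / (2 + ω * L)) ((1/2) / (2 + ω * L)) L) +
        Measure.map (fun x : ℝ => (x, (0:ℝ)))
          (rtpComponent ((1/2) / (2 + ω * L)) (ω / 2 / (2 + ω * L)) ((1/2) / (2 + ω * L)) L) +
        Measure.map (fun x : ℝ => (x, (-2:ℝ)))
          (rtpComponent ((1/2) / (2 + ω * L)) (ω / 4 / (2 + ω * L)) 0 L))
    (f f' f'' g g' g'' : ℝ → ℝ)
    (hf : ∀ x ∈ Icc (0:ℝ) L, HasDerivWithinAt f (f' x) (Icc (0:ℝ) L) x)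
    (hf' : ∀ x ∈ Icc (0:ℝ) L, HasDerivWithinAt f' (f'' x) (Icc (0:ℝ) L) x)
    (hf'' : ContinuousOn f'' (Icc (0:ℝ) L))
    (hg : ∀ x ∈ Icc (0:ℝ) L, HasDerivWithinAt g (g' x) (Icc (0:ℝ) L) x)
    (hg' : ∀ x ∈ Icc (0:ℝ) L, HasDerivWithinAt g' (g'' x) (Icc (0:ℝ) L) x)
    (hg'' : ContinuousOn g'' (Icc (0:ℝ) L))
    (hfBC0 : f'' 0 = ω * f' 0) (hfBCL : f'' L = -ω * f' L)
    (hgBC0 : g'' 0 = ω * g' 0) (hgBCL : g'' L = -ω * g' L)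
    (F G : ℝ × ℝ → ℝ)
    (hF : ∀ p : ℝ × ℝ, F p = p.2 * (if p.1 ∈ Ioo (0:ℝ) L then f' p.1 else 0))
    (hG : ∀ p : ℝ × ℝ, G p = p.2 * (if p.1 ∈ Ioo (0:ℝ) L then g' p.1 else 0)) :
    (∫ p, F p * g p.1 ∂μhat = 0) ∧
      ((1/2 : ℝ) * ∫ p, F p * G p ∂μhat = -∫ x, f'' x * g x ∂(stickyMeasure ω L)) ∧
      (ω / (2 + ω * L) * ∫ x in (0:ℝ)..L, f' x * g' x =
        -(1 / (2 + ω * L)) * (f'' 0 * g 0 + f'' L * g L) -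
          ω / (2 + ω * L) * ∫ x in (0:ℝ)..L, f'' x * g x) := by
  have hc : (0:ℝ) < 2 + ω * L := by nlinarith
  have cf' : ContinuousOn f' (Icc 0 L) := fun x hx => (hf' x hx).continuousWithinAt
  have cg' : ContinuousOn g' (Icc 0 L) := fun x hx => (hg' x hx).continuousWithinAt
  have cg : ContinuousOn g (Icc 0 L) := fun x hx => (hg x hx).continuousWithinAt
  have cfg : ContinuousOn (fun x => f' x * g x) (Icc 0 L) := cf'.mul cg
  have cfg' : ContinuousOn (fun x => f' x * g' x) (Icc 0 L) := cf'.mul cg'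
  have cf''g : ContinuousOn (fun x => f'' x * g x) (Icc 0 L) := hf''.mul cg
  -- integration by parts
  have hderiv : ∀ x ∈ Ioo (0:ℝ) L, HasDerivWithinAt (fun x => f' x * g x)
      (f'' x * g x + f' x * g' x) (Ioi x) x := by
    intro x hx
    have h1 : HasDerivAt f' (f'' x) x :=
      (hf' x (Ioo_subset_Icc_self hx)).hasDerivAt (Icc_mem_nhds hx.1 hx.2)
    have h2 : HasDerivAt g (g' x) x :=
      (hg x (Ioo_subset_Icc_self hx)).hasDerivAt (Icc_mem_nhds hx.1 hx.2)
    exact (h1.mul h2).hasDerivWithinAt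
  have hiiA : IntervalIntegrable (fun x => f'' x * g x) volume 0 L :=
    (by rw [uIcc_of_le hL.le]; exact cf''g :
      ContinuousOn (fun x => f'' x * g x) (uIcc 0 L)).intervalIntegrable
  have hiiB : IntervalIntegrable (fun x => f' x * g' x) volume 0 L :=
    (by rw [uIcc_of_le hL.le]; exact cfg' :
      ContinuousOn (fun x => f' x * g' x) (uIcc 0 L)).intervalIntegrable
  have hsum : (∫ x in (0:ℝ)..L, f'' x * g x) + (∫ x in (0:ℝ)..L, f' x * g' x)
      = f' L * g L - f' 0 * g 0 := by
    have h := intervalIntegral.integral_eq_sub_of_hasDeriv_right_of_le hL.le cfg hderiv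
      (hiiA.add hiiB)
    rwa [intervalIntegral.integral_add hiiA hiiB] at h
  set A := ∫ x in (0:ℝ)..L, f' x * g' x with hA
  set B := ∫ x in (0:ℝ)..L, f'' x * g x with hB
  have key : ω * A = -(f'' 0 * g 0 + f'' L * g L) - ω * B := by
    linear_combination ω * hsum + g 0 * hfBC0 + g L * hfBCL
  have part3 : ω / (2 + ω * L) * A =
      -(1 / (2 + ω * L)) * (f'' 0 * g 0 + f'' L * g L) - ω / (2 + ω * L) * B := by
    have h1 : ω / (2 + ω * L) * A = (ω * A) / (2 + ω * L) := by ring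
    rw [h1, key]; ring
  -- measure computations
  have hd1 : (0:ℝ) ≤ ω / 4 / (2 + ω * L) := by positivity
  have hd2 : (0:ℝ) ≤ (1/2) / (2 + ω * L) := by positivity
  have hd3 : (0:ℝ) ≤ ω / 2 / (2 + ω * L) := by positivity
  have hFg : (fun p : ℝ × ℝ => F p * g p.1)
      = fun p => p.2 * (Ioo (0:ℝ) L).indicator (fun x => f' x * g x) p.1 := by
    funext p
    rw [hF p]
    by_cases h : p.1 ∈ Ioo (0:ℝ) L
    · rw [if_pos h, indicator_of_mem h]; ring
    · rw [if_neg h, indicator_of_notMem h]; ring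
  have hFG : (fun p : ℝ × ℝ => F p * G p)
      = fun p => p.2 * p.2 * (Ioo (0:ℝ) L).indicator (fun x => f' x * g' x) p.1 := by
    funext p
    rw [hF p, hG p]
    by_cases h : p.1 ∈ Ioo (0:ℝ) L
    · rw [if_pos h, if_pos h, indicator_of_mem h]; ring
    · rw [if_neg h, if_neg h, indicator_of_notMem h]; ring
  have hq1 : Measurable fun v : ℝ => v := measurable_id
  have hq2 : Measurable fun v : ℝ => v * v := measurable_id.mul measurable_id
  have part1 : ∫ p, F p * g p.1 ∂μhat = 0 := by
    rw [hFg, hμhat,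
      integral_add_measure
        ((aux_comp_integrable 2 0 (ω / 4 / (2 + ω * L)) ((1/2) / (2 + ω * L)) L _ cfg _
            hq1).add_measure
          (aux_comp_integrable 0 ((1/2) / (2 + ω * L)) (ω / 2 / (2 + ω * L))
            ((1/2) / (2 + ω * L)) L _ cfg _ hq1))
        (aux_comp_integrable (-2) ((1/2) / (2 + ω * L)) (ω / 4 / (2 + ω * L)) 0 L _ cfg _ hq1),
      integral_add_measure
        (aux_comp_integrable 2 0 (ω / 4 / (2 + ω * L)) ((1/2) / (2 + ω * L)) L _ cfg _ hq1)
        (aux_comp_integrable 0 ((1/2) / (2 + ω * L)) (ω / 2 / (2 + ω * L))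
          ((1/2) / (2 + ω * L)) L _ cfg _ hq1),
      aux_comp_integral 2 0 (ω / 4 / (2 + ω * L)) ((1/2) / (2 + ω * L)) L le_rfl hd1 hd2 _
        cfg _ hq1,
      aux_comp_integral 0 ((1/2) / (2 + ω * L)) (ω / 2 / (2 + ω * L)) ((1/2) / (2 + ω * L)) L
        hd2 hd3 hd2 _ cfg _ hq1,
      aux_comp_integral (-2) ((1/2) / (2 + ω * L)) (ω / 4 / (2 + ω * L)) 0 L hd2 hd1 le_rfl _
        cfg _ hq1]
    ring
  refine ⟨part1, ?_, part3⟩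
  have lhs2 : ∫ p, F p * G p ∂μhat = 2 * (ω / (2 + ω * L)) * A := by
    rw [hFG, hμhat,
      integral_add_measure
        ((aux_comp_integrable 2 0 (ω / 4 / (2 + ω * L)) ((1/2) / (2 + ω * L)) L _ cfg' _
            hq2).add_measure
          (aux_comp_integrable 0 ((1/2) / (2 + ω * L)) (ω / 2 / (2 + ω * L))
            ((1/2) / (2 + ω * L)) L _ cfg' _ hq2))
        (aux_comp_integrable (-2) ((1/2) / (2 + ω * L)) (ω / 4 / (2 + ω * L)) 0 L _ cfg' _ hq2),
      integral_add_measure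
        (aux_comp_integrable 2 0 (ω / 4 / (2 + ω * L)) ((1/2) / (2 + ω * L)) L _ cfg' _ hq2)
        (aux_comp_integrable 0 ((1/2) / (2 + ω * L)) (ω / 2 / (2 + ω * L))
          ((1/2) / (2 + ω * L)) L _ cfg' _ hq2),
      aux_comp_integral 2 0 (ω / 4 / (2 + ω * L)) ((1/2) / (2 + ω * L)) L le_rfl hd1 hd2 _
        cfg' _ hq2,
      aux_comp_integral 0 ((1/2) / (2 + ω * L)) (ω / 2 / (2 + ω * L)) ((1/2) / (2 + ω * L)) L
        hd2 hd3 hd2 _ cfg' _ hq2,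
      aux_comp_integral (-2) ((1/2) / (2 + ω * L)) (ω / 4 / (2 + ω * L)) 0 L hd2 hd1 le_rfl _
        cfg' _ hq2,
      aux_Ioo_eq L hL.le, ← hA]
    ring
  have rhs2 : ∫ x, f'' x * g x ∂(stickyMeasure ω L)
      = (2 + ω * L)⁻¹ * (f'' 0 * g 0 + ω * B + f'' L * g L) := by
    rw [aux_sticky_integral ω L hω.le hL.le _ cf''g, aux_Icc_eq L hL.le, ← hB]
  rw [lhs2, rhs2]
  have h1 : (1/2 : ℝ) * (2 * (ω / (2 + ω * L)) * A) = (ω * A) / (2 + ω * L) := by ring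
  rw [h1, key]
  field_simp
  ring
end

section
/- Suppose there exist a ∈ [0,1) and b ≥ 0 such that ΔU(x) ≤ a |∇U(x)|² + b for all x ∈ ℝ^d. Then for every g ∈ C_c^∞(ℝ^d): ∫ |∇U|² |∇g|² dμ ≤ (2b/(1−a)) ∫ |∇g|² dμ + (4/(1−a)²) ∫ ‖∇²g‖_F² dμ. -/
open MeasureTheory
open scoped NNReal ENNReal

section AuxGibbs

variable {d : ℕ}

lemma aux_ptwise {d : ℕ} (p u : Fin d → ℝ) (h : Fin d → Fin d → ℝ) (S a b ε : ℝ)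
    (hε : 0 < ε) (hS : S ≤ a * (∑ k, (u k)^2) + b) :
    (∑ k, ((∑ j, 2 * p j * h k j) * u k)) + (∑ j, (p j)^2) * S ≤
      (a + ε) * ((∑ j, (p j)^2) * (∑ k, (u k)^2)) + b * (∑ j, (p j)^2)
        + (1/ε) * ∑ k, ∑ j, (h k j)^2 := by
  have hf0 : 0 ≤ ∑ j, (p j)^2 := Finset.sum_nonneg fun j _ => sq_nonneg _
  have h1 : (∑ k, ((∑ j, 2 * p j * h k j) * u k))
      ≤ ε * ((∑ j, (p j)^2) * (∑ k, (u k)^2)) + (1/ε) * ∑ k, ∑ j, (h k j)^2 := by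
    have key : ∀ k : Fin d, ((∑ j, 2 * p j * h k j) * u k) ≤
        ε * ((∑ j, (p j)^2) * (u k)^2) + (1/ε) * ∑ j, (h k j)^2 := by
      intro k
      rw [Finset.sum_mul, Finset.sum_mul]; simp only [Finset.mul_sum]
      rw [← Finset.sum_add_distrib]
      apply Finset.sum_le_sum
      intro j _
      have hinv : ε * (1/ε) = 1 := by field_simp
      nlinarith [sq_nonneg (ε * (p j * u k) - h k j), sq_nonneg (h k j), hε.le,
        mul_pos hε hε, one_div_pos.mpr hε]
    calc (∑ k, ((∑ j, 2 * p j * h k j) * u k))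
        ≤ ∑ k, (ε * ((∑ j, (p j)^2) * (u k)^2) + (1/ε) * ∑ j, (h k j)^2) :=
          Finset.sum_le_sum fun k _ => key k
      _ = ε * ((∑ j, (p j)^2) * (∑ k, (u k)^2)) + (1/ε) * ∑ k, ∑ j, (h k j)^2 := by
          rw [Finset.sum_add_distrib, ← Finset.mul_sum, ← Finset.mul_sum, ← Finset.mul_sum]
  have h2 : (∑ j, (p j)^2) * S ≤ (∑ j, (p j)^2) * (a * (∑ k, (u k)^2) + b) :=
    mul_le_mul_of_nonneg_left hS hf0
  nlinarith [h1, h2]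

lemma aux_gibbs_integral {d : ℕ} (U : (Fin d → ℝ) → ℝ) (hUc : Continuous U)
    (h : (Fin d → ℝ) → ℝ) :
    ∫ x, h x ∂((ENNReal.ofReal (∫ x, Real.exp (-U x)))⁻¹ •
      volume.withDensity (fun x => ENNReal.ofReal (Real.exp (-U x)))) =
    (∫ x, Real.exp (-U x))⁻¹ * ∫ x, h x * Real.exp (-U x) := by
  rw [integral_smul_measure]
  have hm : Measurable fun x => Real.toNNReal (Real.exp (-U x)) :=
    (Real.continuous_exp.comp hUc.neg).measurable.real_toNNReal
  have : (fun x => ENNReal.ofReal (Real.exp (-U x)))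
      = fun x => ((Real.toNNReal (Real.exp (-U x)) : ℝ≥0) : ℝ≥0∞) := rfl
  rw [this, integral_withDensity_eq_integral_smul hm h]
  rw [ENNReal.toReal_inv, ENNReal.toReal_ofReal (integral_nonneg fun x => (Real.exp_pos _).le)]
  congr 1
  apply integral_congr_ae; filter_upwards with x
  rw [NNReal.smul_def, smul_eq_mul, Real.coe_toNNReal _ (Real.exp_pos _).le, mul_comm]

lemma aux_fderiv_exp_neg {U : (Fin d → ℝ) → ℝ} (hU : Differentiable ℝ U) (x v : Fin d → ℝ) :
    fderiv ℝ (fun y => Real.exp (-U y)) x v = -(fderiv ℝ U x v * Real.exp (-U x)) := by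
  rw [fderiv_exp (hU x).fun_neg]
  simp [fderiv_fun_neg]
  ring

lemma aux_fderiv_apply_eq_iterated {φ : (Fin d → ℝ) → ℝ} (hφ : ContDiff ℝ 2 φ)
    (x v w : Fin d → ℝ) :
    fderiv ℝ (fun y => fderiv ℝ φ y w) x v = iteratedFDeriv ℝ 2 φ x ![v, w] := by
  rw [iteratedFDeriv_two_apply]
  have hd : DifferentiableAt ℝ (fderiv ℝ φ) x :=
    ((hφ.fderiv_right (m := 1) (by norm_num)).differentiable one_ne_zero).differentiableAt
  rw [fderiv_clm_apply hd (differentiableAt_const w)]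
  simp

lemma aux_cont_iter2 {φ : (Fin d → ℝ) → ℝ} (hφ : ContDiff ℝ 2 φ) (v w : Fin d → ℝ) :
    Continuous fun x => iteratedFDeriv ℝ 2 φ x ![v, w] := by
  have h1 : ContDiff ℝ 1 (fderiv ℝ φ) := hφ.fderiv_right (by norm_num)
  have : (fun x => iteratedFDeriv ℝ 2 φ x ![v, w])
      = fun x => fderiv ℝ (fderiv ℝ φ) x v w := by
    funext x; rw [iteratedFDeriv_two_apply]; simp
  rw [this]
  exact ((h1.continuous_fderiv one_ne_zero).clm_apply continuous_const).clm_apply continuous_const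

lemma aux_hcs_sum {ι : Type*} {X : Type*} [TopologicalSpace X] [T2Space X] (s : Finset ι)
    (f : ι → X → ℝ) (h : ∀ i ∈ s, HasCompactSupport (f i)) :
    HasCompactSupport fun x => ∑ i ∈ s, f i x := by
  classical
  induction s using Finset.cons_induction with
  | empty =>
      simp only [Finset.sum_empty]
      exact HasCompactSupport.intro isCompact_empty (fun x _ => rfl)
  | cons i s hi ih =>
      simp only [Finset.sum_cons]
      exact HasCompactSupport.add (h i (Finset.mem_cons_self i s))
        (ih fun j hj => h j (Finset.mem_cons_of_mem hj))

lemma aux_integrable_cpt {f h : (Fin d → ℝ) → ℝ} (hf : Continuous f)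
    (hsupp : HasCompactSupport f) (hh : Continuous h) :
    Integrable (fun x => f x * h x) :=
  (hf.mul hh).integrable_of_hasCompactSupport hsupp.mul_right

lemma aux_fderiv_gradsq {g : (Fin d → ℝ) → ℝ} (hg : ContDiff ℝ (⊤ : ℕ∞) g) (x v : Fin d → ℝ) :
    fderiv ℝ (fun y => ∑ j, (fderiv ℝ g y (Pi.single j 1))^2) x v
      = ∑ j, 2 * fderiv ℝ g x (Pi.single j 1) * iteratedFDeriv ℝ 2 g x ![v, Pi.single j 1] := by
  have hg1 : ContDiff ℝ (⊤ : ℕ∞) (fderiv ℝ g) := hg.fderiv_right (by simp)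
  have hP : ∀ j : Fin d, ContDiff ℝ (⊤ : ℕ∞) (fun y => fderiv ℝ g y (Pi.single j 1)) :=
    fun j => hg1.clm_apply contDiff_const
  have hdiff : ∀ j ∈ Finset.univ, DifferentiableAt ℝ
      (fun y => (fderiv ℝ g y (Pi.single j (1:ℝ)))^2) x :=
    fun j _ => (((hP j).pow 2).differentiable (by simp)).differentiableAt
  rw [fderiv_fun_sum hdiff, ContinuousLinearMap.sum_apply]
  refine Finset.sum_congr rfl fun j _ => ?_
  have hPd : DifferentiableAt ℝ (fun y => fderiv ℝ g y (Pi.single j (1:ℝ))) x :=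
    ((hP j).differentiable (by simp)).differentiableAt
  have : fderiv ℝ (fun y => (fderiv ℝ g y (Pi.single j (1:ℝ)))^2) x
      = fderiv ℝ (fun y => (fderiv ℝ g y (Pi.single j (1:ℝ))) *
          (fderiv ℝ g y (Pi.single j (1:ℝ)))) x := by
    congr 1; funext y; ring
  rw [this, fderiv_fun_mul hPd hPd,
    ← aux_fderiv_apply_eq_iterated (hg.of_le (WithTop.coe_le_coe.mpr le_top)) x v (Pi.single j 1)]
  simp
  ring

lemma aux_ibp_k {U f : (Fin d → ℝ) → ℝ} (hU : ContDiff ℝ 2 U)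
    (hf : ContDiff ℝ (⊤ : ℕ∞) f) (hfsupp : HasCompactSupport f) (k : Fin d) :
    ∫ x, f x * (fderiv ℝ U x (Pi.single k 1))^2 * Real.exp (-U x)
      = ∫ x, fderiv ℝ (fun y => f y * fderiv ℝ U y (Pi.single k 1)) x (Pi.single k 1)
          * Real.exp (-U x) := by
  set v : Fin d → ℝ := Pi.single k 1 with hv
  set φ : (Fin d → ℝ) → ℝ := fun y => f y * fderiv ℝ U y v with hφ
  set w : (Fin d → ℝ) → ℝ := fun x => Real.exp (-U x) with hw
  have hUd : Differentiable ℝ U := hU.differentiable two_ne_zero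
  have hUk : ContDiff ℝ 1 (fun y => fderiv ℝ U y v) :=
    (hU.fderiv_right (by norm_num)).clm_apply contDiff_const
  have hφc : ContDiff ℝ 1 φ := (hf.of_le (by simp)).mul hUk
  have hφsupp : HasCompactSupport φ := hfsupp.mul_right
  have hwc : ContDiff ℝ 2 w := (hU.neg).exp
  have hwd : Differentiable ℝ w := hwc.differentiable two_ne_zero
  have hφ'supp : HasCompactSupport (fun x => fderiv ℝ φ x v) :=
    hφsupp.fderiv_apply (𝕜 := ℝ) v
  have hφ'c : Continuous (fun x => fderiv ℝ φ x v) :=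
    (hφc.continuous_fderiv one_ne_zero).clm_apply continuous_const
  have hw'c : Continuous (fun x => fderiv ℝ w x v) :=
    ((hwc.fderiv_right (m := 1) (by norm_num)).clm_apply contDiff_const).continuous
  have i1 : Integrable (fun x => fderiv ℝ φ x v * w x) :=
    aux_integrable_cpt hφ'c hφ'supp hwc.continuous
  have i2 : Integrable (fun x => φ x * fderiv ℝ w x v) :=
    aux_integrable_cpt hφc.continuous hφsupp hw'c
  have i3 : Integrable (fun x => φ x * w x) :=
    aux_integrable_cpt hφc.continuous hφsupp hwc.continuous
  have key := integral_mul_fderiv_eq_neg_fderiv_mul_of_integrable i1 i2 i3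
    (fun x _ => hφc.differentiable one_ne_zero x) (fun x _ => hwd x)
  have lhs_eq : ∫ x, φ x * fderiv ℝ w x v = ∫ x, -(f x * (fderiv ℝ U x v)^2 * w x) := by
    apply integral_congr_ae; filter_upwards with x
    rw [hw, aux_fderiv_exp_neg hUd x v]
    simp only [hφ]; ring
  rw [lhs_eq, integral_neg] at key
  exact neg_injective key

lemma aux_fderiv_phi {U f : (Fin d → ℝ) → ℝ} (hU : ContDiff ℝ 2 U)
    (hf : ContDiff ℝ (⊤ : ℕ∞) f) (x v : Fin d → ℝ) :
    fderiv ℝ (fun y => f y * fderiv ℝ U y v) x v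
      = fderiv ℝ f x v * fderiv ℝ U x v + f x * iteratedFDeriv ℝ 2 U x ![v, v] := by
  have hUk : DifferentiableAt ℝ (fun y => fderiv ℝ U y v) x :=
    (((hU.fderiv_right (m := 1) (by norm_num)).clm_apply
      contDiff_const).differentiable one_ne_zero).differentiableAt
  have hfd : DifferentiableAt ℝ f x := (hf.differentiable (by simp)).differentiableAt
  rw [fderiv_fun_mul hfd hUk, ← aux_fderiv_apply_eq_iterated hU x v v]
  simp
  ring

end AuxGibbs

set_option maxHeartbeats 2000000 in
/-- **Gradient-weight estimate under the condition `ΔU ≤ a |∇U|² + b`.**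
Let `μ ∝ e^{-U}` be the Gibbs probability measure on `ℝ^d` for `U ∈ C²` with
`∫ e^{-U} < ∞`. If `ΔU(x) ≤ a |∇U(x)|² + b` for all `x`, with `a ∈ [0,1)` and `b ≥ 0`,
then for every `g ∈ C_c^∞(ℝ^d)`:
`∫ |∇U|² |∇g|² dμ ≤ (2b/(1-a)) ∫ |∇g|² dμ + (4/(1-a)²) ∫ ‖∇²g‖_F² dμ`.
Here `∂_k φ x = fderiv ℝ φ x (Pi.single k 1)` and
`∂_{ij} φ x = iteratedFDeriv ℝ 2 φ x ![Pi.single i 1, Pi.single j 1]`. -/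
theorem stmt_12 (d : ℕ) (hd : 1 ≤ d) (U : (Fin d → ℝ) → ℝ)
    (hU : ContDiff ℝ 2 U)
    (hUint : Integrable (fun x => Real.exp (-U x)))
    (μ : Measure (Fin d → ℝ))
    (hμ : μ = (ENNReal.ofReal (∫ x, Real.exp (-U x)))⁻¹ •
      volume.withDensity (fun x => ENNReal.ofReal (Real.exp (-U x))))
    (a b : ℝ) (ha0 : 0 ≤ a) (ha1 : a < 1) (hb : 0 ≤ b)
    (hUab : ∀ x,
      (∑ k, iteratedFDeriv ℝ 2 U x ![Pi.single k 1, Pi.single k 1]) ≤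
        a * (∑ k, (fderiv ℝ U x (Pi.single k 1)) ^ 2) + b)
    (g : (Fin d → ℝ) → ℝ) (hg : ContDiff ℝ (⊤ : ℕ∞) g) (hgsupp : HasCompactSupport g) :
    ∫ x, (∑ k, (fderiv ℝ U x (Pi.single k 1)) ^ 2) *
        (∑ k, (fderiv ℝ g x (Pi.single k 1)) ^ 2) ∂μ ≤
      (2 * b / (1 - a)) * ∫ x, (∑ k, (fderiv ℝ g x (Pi.single k 1)) ^ 2) ∂μ +
        (4 / (1 - a) ^ 2) *
          ∫ x, (∑ i, ∑ j,
            (iteratedFDeriv ℝ 2 g x ![Pi.single i 1, Pi.single j 1]) ^ 2) ∂μ := by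
  have h1a : (0:ℝ) < 1 - a := by linarith
  have hUc : Continuous U := hU.continuous
  -- notation
  set F : (Fin d → ℝ) → ℝ := fun y => ∑ j, (fderiv ℝ g y (Pi.single j 1))^2 with hF
  set q : (Fin d → ℝ) → ℝ := fun x => ∑ k, (fderiv ℝ U x (Pi.single k 1))^2 with hq
  set HS : (Fin d → ℝ) → ℝ := fun x => ∑ i, ∑ j,
      (iteratedFDeriv ℝ 2 g x ![Pi.single i 1, Pi.single j 1])^2 with hHS
  set w : (Fin d → ℝ) → ℝ := fun x => Real.exp (-U x) with hw
  -- basic regularity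
  have hg1 : ContDiff ℝ (⊤ : ℕ∞) (fderiv ℝ g) := hg.fderiv_right (by simp)
  have hFc : ContDiff ℝ (⊤ : ℕ∞) F :=
    ContDiff.sum fun j _ => (hg1.clm_apply contDiff_const).pow 2
  have hFsupp : HasCompactSupport F := by
    have : F = (fun L : (Fin d → ℝ) →L[ℝ] ℝ => ∑ j, (L (Pi.single j 1))^2) ∘ fderiv ℝ g := rfl
    rw [this]
    exact (hgsupp.fderiv (𝕜 := ℝ)).comp_left (by simp)
  have hwc : Continuous w := (Real.continuous_exp.comp hUc.neg)
  have hqc : Continuous q := continuous_finset_sum _ fun k _ =>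
    (((hU.fderiv_right (m := 1) (by norm_num)).clm_apply contDiff_const).continuous).pow 2
  have hpc : ∀ j : Fin d, Continuous fun x => fderiv ℝ g x (Pi.single j 1) :=
    fun j => ((hg1.clm_apply contDiff_const).continuous)
  have hpsupp : ∀ j : Fin d, HasCompactSupport fun x => fderiv ℝ g x (Pi.single j 1) :=
    fun j => hgsupp.fderiv_apply (𝕜 := ℝ) (Pi.single j 1)
  have hHgc : ∀ k j : Fin d, Continuous fun x =>
      iteratedFDeriv ℝ 2 g x ![Pi.single k 1, Pi.single j 1] :=
    fun k j => aux_cont_iter2 (hg.of_le (WithTop.coe_le_coe.mpr le_top)) _ _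
  have hHgsupp : ∀ k j : Fin d, HasCompactSupport fun x =>
      iteratedFDeriv ℝ 2 g x ![Pi.single k 1, Pi.single j 1] :=
    fun k j => by
      have : (fun x => iteratedFDeriv ℝ 2 g x ![Pi.single k 1, Pi.single j 1])
          = (fun Φ : ContinuousMultilinearMap ℝ (fun _ : Fin 2 => (Fin d → ℝ)) ℝ =>
              Φ ![Pi.single k 1, Pi.single j 1]) ∘ iteratedFDeriv ℝ 2 g := rfl
      rw [this]
      exact (hgsupp.iteratedFDeriv (𝕜 := ℝ) 2).comp_left rfl
  have hHUc : ∀ k : Fin d, Continuous fun x =>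
      iteratedFDeriv ℝ 2 U x ![Pi.single k 1, Pi.single k 1] :=
    fun k => aux_cont_iter2 hU _ _
  have hHSc : Continuous HS := continuous_finset_sum _ fun i _ =>
    continuous_finset_sum _ fun j _ => (hHgc i j).pow 2
  have hHSsupp : HasCompactSupport HS :=
    aux_hcs_sum _ _ fun i _ => aux_hcs_sum _ _ fun j _ =>
      (hHgsupp i j).comp_left (g := fun y : ℝ => y^2) (by simp)
  -- the post-IBP integrand
  set T : (Fin d → ℝ) → ℝ := fun x => ∑ k,
      ((∑ j, 2 * fderiv ℝ g x (Pi.single j 1) *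
          iteratedFDeriv ℝ 2 g x ![Pi.single k 1, Pi.single j 1]) *
        fderiv ℝ U x (Pi.single k 1)
      + F x * iteratedFDeriv ℝ 2 U x ![Pi.single k 1, Pi.single k 1]) with hT
  -- integrability facts
  have iQF : Integrable (fun x => q x * F x * w x) := by
    have : HasCompactSupport fun x => q x * F x :=
      (hFsupp.mul_left : HasCompactSupport fun x => q x * F x)
    exact aux_integrable_cpt (hqc.mul hFc.continuous) this hwc
  have iFw : Integrable (fun x => F x * w x) :=
    aux_integrable_cpt hFc.continuous hFsupp hwc
  have iHS : Integrable (fun x => HS x * w x) :=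
    aux_integrable_cpt hHSc hHSsupp hwc
  have hDksupp : ∀ k : Fin d, HasCompactSupport fun x =>
      (∑ j, 2 * fderiv ℝ g x (Pi.single j 1) *
          iteratedFDeriv ℝ 2 g x ![Pi.single k 1, Pi.single j 1]) *
        fderiv ℝ U x (Pi.single k 1)
      + F x * iteratedFDeriv ℝ 2 U x ![Pi.single k 1, Pi.single k 1] := by
    intro k
    apply HasCompactSupport.add
    · apply HasCompactSupport.mul_right
      apply aux_hcs_sum
      intro j _
      exact ((hpsupp j).mul_left.mul_right :)
    · exact (hFsupp.mul_right :)
  have hDkc : ∀ k : Fin d, Continuous fun x =>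
      (∑ j, 2 * fderiv ℝ g x (Pi.single j 1) *
          iteratedFDeriv ℝ 2 g x ![Pi.single k 1, Pi.single j 1]) *
        fderiv ℝ U x (Pi.single k 1)
      + F x * iteratedFDeriv ℝ 2 U x ![Pi.single k 1, Pi.single k 1] := by
    intro k
    apply Continuous.add
    · exact (continuous_finset_sum _ fun j _ =>
        (continuous_const.mul (hpc j)).mul (hHgc k j)).mul
        (((hU.fderiv_right (m := 1) (by norm_num)).clm_apply contDiff_const).continuous)
    · exact hFc.continuous.mul (hHUc k)
  have iDk : ∀ k : Fin d, Integrable (fun x =>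
      ((∑ j, 2 * fderiv ℝ g x (Pi.single j 1) *
          iteratedFDeriv ℝ 2 g x ![Pi.single k 1, Pi.single j 1]) *
        fderiv ℝ U x (Pi.single k 1)
      + F x * iteratedFDeriv ℝ 2 U x ![Pi.single k 1, Pi.single k 1]) * w x) :=
    fun k => aux_integrable_cpt (hDkc k) (hDksupp k) hwc
  have iqk : ∀ k : Fin d, Integrable (fun x =>
      F x * (fderiv ℝ U x (Pi.single k 1))^2 * w x) := by
    intro k
    refine aux_integrable_cpt (hFc.continuous.mul ?_) (hFsupp.mul_right :) hwc
    exact (((hU.fderiv_right (m := 1) (by norm_num)).clm_apply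
      contDiff_const).continuous).pow 2
  -- main volume-measure estimate
  have hvol : ∫ x, q x * F x * w x ≤
      (2 * b / (1 - a)) * (∫ x, F x * w x) + (4 / (1 - a)^2) * (∫ x, HS x * w x) := by
    have step1 : ∫ x, q x * F x * w x = ∑ k, ∫ x,
        F x * (fderiv ℝ U x (Pi.single k 1))^2 * w x := by
      rw [← integral_finset_sum _ fun k _ => iqk k]
      apply integral_congr_ae; filter_upwards with x
      simp only [hq]
      rw [Finset.sum_mul, Finset.sum_mul]
      exact Finset.sum_congr rfl fun k _ => by ring
    have step2 : ∀ k : Fin d, ∫ x, F x * (fderiv ℝ U x (Pi.single k 1))^2 * w x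
        = ∫ x, ((∑ j, 2 * fderiv ℝ g x (Pi.single j 1) *
              iteratedFDeriv ℝ 2 g x ![Pi.single k 1, Pi.single j 1]) *
            fderiv ℝ U x (Pi.single k 1)
          + F x * iteratedFDeriv ℝ 2 U x ![Pi.single k 1, Pi.single k 1]) * w x := by
      intro k
      rw [aux_ibp_k hU hFc hFsupp k]
      apply integral_congr_ae; filter_upwards with x
      congr 1
      rw [aux_fderiv_phi hU hFc x (Pi.single k 1), aux_fderiv_gradsq hg x (Pi.single k 1)]
    have step3 : ∫ x, q x * F x * w x = ∫ x, T x * w x := by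
      rw [step1]
      rw [Finset.sum_congr rfl fun k _ => step2 k]
      rw [← integral_finset_sum _ fun k _ => iDk k]
      apply integral_congr_ae; filter_upwards with x
      simp only [hT]
      rw [Finset.sum_mul]
    have iRHS : Integrable (fun x => (a + (1-a)/2) * (q x * F x * w x) +
        (b * (F x * w x) + (2/(1-a)) * (HS x * w x))) :=
      (iQF.const_mul _).add ((iFw.const_mul _).add (iHS.const_mul _))
    have iT : Integrable (fun x => T x * w x) := by
      have : (fun x => T x * w x) = fun x => ∑ k,
          (((∑ j, 2 * fderiv ℝ g x (Pi.single j 1) *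
              iteratedFDeriv ℝ 2 g x ![Pi.single k 1, Pi.single j 1]) *
            fderiv ℝ U x (Pi.single k 1)
          + F x * iteratedFDeriv ℝ 2 U x ![Pi.single k 1, Pi.single k 1]) * w x) := by
        funext x; simp only [hT]; rw [Finset.sum_mul]
      rw [this]
      exact integrable_finset_sum _ fun k _ => iDk k
    have hmono : ∫ x, T x * w x ≤ ∫ x, ((a + (1-a)/2) * (q x * F x * w x) +
        (b * (F x * w x) + (2/(1-a)) * (HS x * w x))) := by
      apply integral_mono iT iRHS
      intro x
      have hpt := aux_ptwise (fun j => fderiv ℝ g x (Pi.single j 1))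
        (fun k => fderiv ℝ U x (Pi.single k 1))
        (fun k j => iteratedFDeriv ℝ 2 g x ![Pi.single k 1, Pi.single j 1])
        (∑ k, iteratedFDeriv ℝ 2 U x ![Pi.single k 1, Pi.single k 1])
        a b ((1-a)/2) (by linarith) (hUab x)
      rw [one_div_div] at hpt
      have hTx : T x = (∑ k, ((∑ j, 2 * fderiv ℝ g x (Pi.single j 1) *
            iteratedFDeriv ℝ 2 g x ![Pi.single k 1, Pi.single j 1]) *
          fderiv ℝ U x (Pi.single k 1)))
          + F x * (∑ k, iteratedFDeriv ℝ 2 U x ![Pi.single k 1, Pi.single k 1]) := by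
        simp only [hT]; rw [Finset.sum_add_distrib, Finset.mul_sum]
      have hw0 : 0 ≤ w x := (Real.exp_pos _).le
      calc T x * w x
          ≤ ((a + (1-a)/2) * (F x * q x) + b * F x + (2/(1-a)) * HS x) * w x := by
            apply mul_le_mul_of_nonneg_right _ hw0
            rw [hTx]
            exact hpt
        _ = (a + (1-a)/2) * (q x * F x * w x) +
            (b * (F x * w x) + (2/(1-a)) * (HS x * w x)) := by ring
    have hsplit : ∫ x, ((a + (1-a)/2) * (q x * F x * w x) +
        (b * (F x * w x) + (2/(1-a)) * (HS x * w x)))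
        = (a + (1-a)/2) * (∫ x, q x * F x * w x) +
          (b * (∫ x, F x * w x) + (2/(1-a)) * (∫ x, HS x * w x)) := by
      have i23 : Integrable (fun x => b * (F x * w x) + (2/(1-a)) * (HS x * w x)) :=
        (iFw.const_mul b).add (iHS.const_mul (2/(1-a)))
      rw [integral_add (iQF.const_mul (a + (1-a)/2)) i23,
        integral_add (iFw.const_mul b) (iHS.const_mul (2/(1-a))),
        integral_const_mul, integral_const_mul, integral_const_mul]
    set I := ∫ x, q x * F x * w x
    set A := ∫ x, F x * w x
    set B := ∫ x, HS x * w x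
    have hkey : I ≤ (a + (1-a)/2) * I + (b * A + (2/(1-a)) * B) := by
      calc I = ∫ x, T x * w x := step3
        _ ≤ _ := hmono
        _ = _ := hsplit
    have h3 : (1-a)/2 * I ≤ b * A + 2/(1-a) * B := by nlinarith [hkey]
    have hne : (1 - a) ≠ 0 := ne_of_gt h1a
    have h4 := mul_le_mul_of_nonneg_left h3 (le_of_lt (by positivity : (0:ℝ) < 2/(1-a)))
    calc I = 2/(1-a) * ((1-a)/2 * I) := by field_simp
      _ ≤ 2/(1-a) * (b * A + 2/(1-a) * B) := h4
      _ = 2 * b / (1-a) * A + 4/(1-a)^2 * B := by field_simp; ring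
  -- transfer to μ
  rw [hμ, aux_gibbs_integral U hUc, aux_gibbs_integral U hUc, aux_gibbs_integral U hUc]
  have hZ : 0 ≤ (∫ x, Real.exp (-U x))⁻¹ :=
    inv_nonneg.mpr (integral_nonneg fun x => (Real.exp_pos _).le)
  have := mul_le_mul_of_nonneg_left hvol hZ
  calc (∫ x, Real.exp (-U x))⁻¹ * (∫ x, q x * F x * w x)
      ≤ (∫ x, Real.exp (-U x))⁻¹ * ((2 * b / (1 - a)) * (∫ x, F x * w x) +
          (4 / (1 - a)^2) * (∫ x, HS x * w x)) := this
    _ = (2 * b / (1 - a)) * ((∫ x, Real.exp (-U x))⁻¹ * (∫ x, F x * w x)) +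
        (4 / (1 - a)^2) * ((∫ x, Real.exp (-U x))⁻¹ * (∫ x, HS x * w x)) := by ring
end

section
/- Suppose there exists L ≥ 0 such that ∂_{kk} U(x) ≤ L for all k ∈ {1,…,d} and all x ∈ ℝ^d. Then for every g ∈ C_c^∞(ℝ^d): Σ_{k=1}^d ∫ (∂_k U)² (∂_k g)² dμ ≤ 2L ∫ |∇g|² dμ + 4 Σ_{k=1}^d ∫ (∂_{kk} g)² dμ. -/
open MeasureTheory

private lemma dz_aux {d : ℕ} {f : (Fin d → ℝ) → ℝ} (v : Fin d → ℝ) (x : Fin d → ℝ)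
    (hx : x ∉ tsupport f) : fderiv ℝ f x v = 0 := by
  have : fderiv ℝ f x = 0 := by
    by_contra h
    exact hx (support_fderiv_subset ℝ (Function.mem_support.2 h))
  simp [this]

private lemma tsupp_aux {d : ℕ} {f : (Fin d → ℝ) → ℝ} (v : Fin d → ℝ) :
    tsupport (fun x => fderiv ℝ f x v) ⊆ tsupport f := by
  apply closure_minimal ?_ (isClosed_tsupport f)
  intro x hx
  by_contra hxx
  exact hx (by simp [Function.mem_support, dz_aux v x hxx] at *)

private lemma iter_two_aux {d : ℕ} {f : (Fin d → ℝ) → ℝ} (hf : ContDiff ℝ 2 f)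
    (v : Fin d → ℝ) (x : Fin d → ℝ) :
    iteratedFDeriv ℝ 2 f x ![v, v] = fderiv ℝ (fun y => fderiv ℝ f y v) x v := by
  rw [iteratedFDeriv_two_apply]
  have hdiff : DifferentiableAt ℝ (fderiv ℝ f) x :=
    ((hf.fderiv_right (le_refl _)).differentiable one_ne_zero) x
  have h := fderiv_clm_apply (c := fderiv ℝ f) (u := fun _ => v) (x := x) hdiff
    (differentiableAt_const v)
  simp only [fderiv_fun_const, Pi.zero_apply, ContinuousLinearMap.comp_zero, zero_add] at h
  simp [h]

/-- Per-direction estimate, with respect to the unnormalized weight `exp (-U)` and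
with second derivatives written as iterated first derivatives. -/
private lemma per_k {d : ℕ} {U g : (Fin d → ℝ) → ℝ} (hU : ContDiff ℝ 2 U)
    (hg : ContDiff ℝ (⊤ : ℕ∞) g) (hgsupp : HasCompactSupport g) {L : ℝ} {v : Fin d → ℝ}
    (hLv : ∀ x, fderiv ℝ (fun y => fderiv ℝ U y v) x v ≤ L) :
    ∫ x, Real.exp (-U x) * ((fderiv ℝ U x v) ^ 2 * (fderiv ℝ g x v) ^ 2) ≤
      2 * L * (∫ x, Real.exp (-U x) * (fderiv ℝ g x v) ^ 2)
        + 4 * (∫ x, Real.exp (-U x) * (fderiv ℝ (fun y => fderiv ℝ g y v) x v) ^ 2) := by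
  have hUdiff : Differentiable ℝ U := hU.differentiable two_ne_zero
  have hufc : ContDiff ℝ 1 fun x => fderiv ℝ U x v :=
    (hU.fderiv_right (m := 1) (by norm_num)).clm_apply contDiff_const
  have hufd : Differentiable ℝ fun x => fderiv ℝ U x v := hufc.differentiable one_ne_zero
  have hwfc : ContDiff ℝ (⊤ : ℕ∞) fun x => fderiv ℝ g x v :=
    (hg.fderiv_right (m := (⊤ : ℕ∞)) (by simp)).clm_apply contDiff_const
  have hwfd : Differentiable ℝ fun x => fderiv ℝ g x v := hwfc.differentiable (by simp)
  have hu'c : Continuous fun x => fderiv ℝ (fun y => fderiv ℝ U y v) x v :=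
    ((hufc.fderiv_right (m := 0) (by norm_num)).clm_apply contDiff_const).continuous
  have hw'c : Continuous fun x => fderiv ℝ (fun y => fderiv ℝ g y v) x v :=
    ((hwfc.fderiv_right (m := (⊤ : ℕ∞)) (by simp)).clm_apply contDiff_const).continuous
  have hec : Continuous fun x => Real.exp (-U x) := Real.continuous_exp.comp hU.continuous.neg
  have hufC : Continuous fun x => fderiv ℝ U x v := hufc.continuous
  have hwfC : Continuous fun x => fderiv ℝ g x v := hwfc.continuous
  have hz1 : ∀ x, x ∉ tsupport g → fderiv ℝ g x v = 0 := fun x hx => dz_aux v x hx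
  have hz2 : ∀ x, x ∉ tsupport g → fderiv ℝ (fun y => fderiv ℝ g y v) x v = 0 :=
    fun x hx => dz_aux v x (fun h => hx (tsupp_aux v h))
  have master : ∀ f : (Fin d → ℝ) → ℝ, Continuous f →
      (∀ x, x ∉ tsupport g → f x = 0) → Integrable f := fun f hfc hf0 =>
    hfc.integrable_of_hasCompactSupport (HasCompactSupport.intro hgsupp hf0)
  have intA : Integrable fun x =>
      Real.exp (-U x) * ((fderiv ℝ U x v) ^ 2 * (fderiv ℝ g x v) ^ 2) :=
    master _ (hec.mul ((hufC.pow 2).mul (hwfC.pow 2))) (fun x hx => by simp [hz1 x hx])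
  have intB : Integrable fun x => Real.exp (-U x) * (fderiv ℝ g x v) ^ 2 :=
    master _ (hec.mul (hwfC.pow 2)) (fun x hx => by simp [hz1 x hx])
  have intC : Integrable fun x =>
      Real.exp (-U x) * (fderiv ℝ (fun y => fderiv ℝ g y v) x v) ^ 2 :=
    master _ (hec.mul (hw'c.pow 2)) (fun x hx => by simp [hz2 x hx])
  have intR : Integrable fun x =>
      Real.exp (-U x) * (fderiv ℝ (fun y => fderiv ℝ U y v) x v * (fderiv ℝ g x v) ^ 2
        + 2 * fderiv ℝ U x v * fderiv ℝ g x v * fderiv ℝ (fun y => fderiv ℝ g y v) x v) :=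
    master _
      (hec.mul ((hu'c.mul (hwfC.pow 2)).add
        ((((continuous_const.mul hufC).mul hwfC).mul hw'c))))
      (fun x hx => by simp [hz1 x hx, hz2 x hx])
  have intM : Integrable fun x =>
      Real.exp (-U x) * (L * (fderiv ℝ g x v) ^ 2
        + (1/2) * ((fderiv ℝ U x v) ^ 2 * (fderiv ℝ g x v) ^ 2)
        + 2 * (fderiv ℝ (fun y => fderiv ℝ g y v) x v) ^ 2) :=
    master _
      (hec.mul (((continuous_const.mul (hwfC.pow 2)).add
        (continuous_const.mul ((hufC.pow 2).mul (hwfC.pow 2)))).add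
        (continuous_const.mul (hw'c.pow 2))))
      (fun x hx => by simp [hz1 x hx, hz2 x hx])
  -- integration by parts
  have hρd : ∀ x : Fin d → ℝ,
      HasFDerivAt (fun y => Real.exp (-U y)) (Real.exp (-U x) • -fderiv ℝ U x) x :=
    fun x => ((hUdiff x).hasFDerivAt.neg).exp
  have hh : ∀ x : Fin d → ℝ, HasFDerivAt
      (fun y => fderiv ℝ U y v * (fderiv ℝ g y v * fderiv ℝ g y v))
      ((fderiv ℝ U x v) • ((fderiv ℝ g x v) • fderiv ℝ (fun y => fderiv ℝ g y v) x
          + (fderiv ℝ g x v) • fderiv ℝ (fun y => fderiv ℝ g y v) x)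
        + (fderiv ℝ g x v * fderiv ℝ g x v) • fderiv ℝ (fun y => fderiv ℝ U y v) x) x :=
    fun x => (hufd x).hasFDerivAt.mul ((hwfd x).hasFDerivAt.mul (hwfd x).hasFDerivAt)
  have ibp := integral_bilinear_hasFDerivAt_right_eq_neg_left_of_integrable
    (μ := (volume : Measure (Fin d → ℝ))) (B := ContinuousLinearMap.mul ℝ ℝ) (v := v)
    (f := fun y => fderiv ℝ U y v * (fderiv ℝ g y v * fderiv ℝ g y v))
    (f' := fun x => (fderiv ℝ U x v) • ((fderiv ℝ g x v) • fderiv ℝ (fun y => fderiv ℝ g y v) x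
          + (fderiv ℝ g x v) • fderiv ℝ (fun y => fderiv ℝ g y v) x)
        + (fderiv ℝ g x v * fderiv ℝ g x v) • fderiv ℝ (fun y => fderiv ℝ U y v) x)
    (g := fun y => Real.exp (-U y))
    (g' := fun x => Real.exp (-U x) • -fderiv ℝ U x)
    (by
      apply master
      · simp only [ContinuousLinearMap.mul_apply', ContinuousLinearMap.add_apply,
          ContinuousLinearMap.smul_apply, smul_eq_mul]
        exact (((hufC.mul ((hwfC.mul hw'c).add (hwfC.mul hw'c))).add
          ((hwfC.mul hwfC).mul hu'c)).mul hec)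
      · intro x hx
        simp [ContinuousLinearMap.mul_apply', hz1 x hx, hz2 x hx])
    (by
      apply master
      · simp only [ContinuousLinearMap.mul_apply', ContinuousLinearMap.smul_apply,
          ContinuousLinearMap.neg_apply, smul_eq_mul]
        exact ((hufC.mul (hwfC.mul hwfC)).mul (hec.mul hufC.neg))
      · intro x hx
        simp [ContinuousLinearMap.mul_apply', hz1 x hx])
    (by
      apply master
      · simp only [ContinuousLinearMap.mul_apply']
        exact ((hufC.mul (hwfC.mul hwfC)).mul hec)
      · intro x hx
        simp [ContinuousLinearMap.mul_apply', hz1 x hx])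
    (fun x _ => hh x) (fun x _ => hρd x)
  have E1 : (∫ x, Real.exp (-U x) * ((fderiv ℝ U x v) ^ 2 * (fderiv ℝ g x v) ^ 2))
      = ∫ x, Real.exp (-U x) * (fderiv ℝ (fun y => fderiv ℝ U y v) x v * (fderiv ℝ g x v) ^ 2
        + 2 * fderiv ℝ U x v * fderiv ℝ g x v * fderiv ℝ (fun y => fderiv ℝ g y v) x v) := by
    simp only [ContinuousLinearMap.mul_apply', ContinuousLinearMap.add_apply,
      ContinuousLinearMap.smul_apply, ContinuousLinearMap.neg_apply, smul_eq_mul] at ibp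
    have h1 : (∫ x, Real.exp (-U x) * ((fderiv ℝ U x v) ^ 2 * (fderiv ℝ g x v) ^ 2))
        = - ∫ x, fderiv ℝ U x v * (fderiv ℝ g x v * fderiv ℝ g x v)
            * (Real.exp (-U x) * -fderiv ℝ U x v) := by
      rw [← integral_neg]
      apply integral_congr_ae
      filter_upwards with x
      ring
    have h2 : (∫ x, Real.exp (-U x)
          * (fderiv ℝ (fun y => fderiv ℝ U y v) x v * (fderiv ℝ g x v) ^ 2
            + 2 * fderiv ℝ U x v * fderiv ℝ g x v * fderiv ℝ (fun y => fderiv ℝ g y v) x v))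
        = ∫ x, (fderiv ℝ U x v * (fderiv ℝ g x v * fderiv ℝ (fun y => fderiv ℝ g y v) x v
              + fderiv ℝ g x v * fderiv ℝ (fun y => fderiv ℝ g y v) x v)
            + fderiv ℝ g x v * fderiv ℝ g x v * fderiv ℝ (fun y => fderiv ℝ U y v) x v)
            * Real.exp (-U x) := by
      apply integral_congr_ae
      filter_upwards with x
      ring
    rw [h1, h2, ibp, neg_neg]
  rw [E1]
  have mono : (∫ x, Real.exp (-U x)
        * (fderiv ℝ (fun y => fderiv ℝ U y v) x v * (fderiv ℝ g x v) ^ 2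
          + 2 * fderiv ℝ U x v * fderiv ℝ g x v * fderiv ℝ (fun y => fderiv ℝ g y v) x v))
      ≤ ∫ x, Real.exp (-U x) * (L * (fderiv ℝ g x v) ^ 2
          + (1/2) * ((fderiv ℝ U x v) ^ 2 * (fderiv ℝ g x v) ^ 2)
          + 2 * (fderiv ℝ (fun y => fderiv ℝ g y v) x v) ^ 2) := by
    apply integral_mono intR intM
    intro x
    apply mul_le_mul_of_nonneg_left _ (Real.exp_pos (-U x)).le
    nlinarith [hLv x, sq_nonneg (fderiv ℝ g x v),
      sq_nonneg (fderiv ℝ U x v * fderiv ℝ g x v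
        - 2 * fderiv ℝ (fun y => fderiv ℝ g y v) x v)]
  have split : (∫ x, Real.exp (-U x) * (L * (fderiv ℝ g x v) ^ 2
        + (1/2) * ((fderiv ℝ U x v) ^ 2 * (fderiv ℝ g x v) ^ 2)
        + 2 * (fderiv ℝ (fun y => fderiv ℝ g y v) x v) ^ 2))
      = L * (∫ x, Real.exp (-U x) * (fderiv ℝ g x v) ^ 2)
        + (1/2) * (∫ x, Real.exp (-U x) * ((fderiv ℝ U x v) ^ 2 * (fderiv ℝ g x v) ^ 2))
        + 2 * (∫ x, Real.exp (-U x) * (fderiv ℝ (fun y => fderiv ℝ g y v) x v) ^ 2) := by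
    have h3 : (fun x => Real.exp (-U x) * (L * (fderiv ℝ g x v) ^ 2
          + (1/2) * ((fderiv ℝ U x v) ^ 2 * (fderiv ℝ g x v) ^ 2)
          + 2 * (fderiv ℝ (fun y => fderiv ℝ g y v) x v) ^ 2))
        = fun x => (L * (Real.exp (-U x) * (fderiv ℝ g x v) ^ 2)
          + (1/2) * (Real.exp (-U x) * ((fderiv ℝ U x v) ^ 2 * (fderiv ℝ g x v) ^ 2)))
          + 2 * (Real.exp (-U x) * (fderiv ℝ (fun y => fderiv ℝ g y v) x v) ^ 2) := by
      funext x; ring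
    rw [show (∫ x, Real.exp (-U x) * (L * (fderiv ℝ g x v) ^ 2
          + (1/2) * ((fderiv ℝ U x v) ^ 2 * (fderiv ℝ g x v) ^ 2)
          + 2 * (fderiv ℝ (fun y => fderiv ℝ g y v) x v) ^ 2))
        = ∫ x, ((L * (Real.exp (-U x) * (fderiv ℝ g x v) ^ 2)
          + (1/2) * (Real.exp (-U x) * ((fderiv ℝ U x v) ^ 2 * (fderiv ℝ g x v) ^ 2)))
          + 2 * (Real.exp (-U x) * (fderiv ℝ (fun y => fderiv ℝ g y v) x v) ^ 2))
        from by rw [h3]]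
    have i12 : Integrable (fun x => L * (Real.exp (-U x) * (fderiv ℝ g x v) ^ 2)
        + (1/2) * (Real.exp (-U x) * ((fderiv ℝ U x v) ^ 2 * (fderiv ℝ g x v) ^ 2))) :=
      (intB.const_mul L).add (intA.const_mul (1/2))
    rw [integral_add i12 (intC.const_mul 2),
      integral_add (intB.const_mul L) (intA.const_mul (1/2)),
      integral_const_mul, integral_const_mul, integral_const_mul]
  rw [split] at mono
  linarith [mono, E1]

/-- **Coordinatewise gradient-weight estimate under `∂_{kk}U ≤ L`.**
Let `μ ∝ e^{-U}` be the Gibbs probability measure on `ℝ^d` for `U ∈ C²` with `∫ e^{-U} < ∞`.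
If `∂_{kk}U(x) ≤ L` for all `k` and `x`, then for every `g ∈ C_c^∞(ℝ^d)`:
`∑_k ∫ (∂_k U)² (∂_k g)² dμ ≤ 2L ∫ |∇g|² dμ + 4 ∑_k ∫ (∂_{kk} g)² dμ`.
Here `∂_k φ x = fderiv ℝ φ x (Pi.single k 1)` and
`∂_{kk} φ x = iteratedFDeriv ℝ 2 φ x ![Pi.single k 1, Pi.single k 1]`. -/
theorem stmt_13 (d : ℕ) (hd : 1 ≤ d) (U : (Fin d → ℝ) → ℝ)
    (hU : ContDiff ℝ 2 U)
    (hUint : Integrable (fun x => Real.exp (-U x)))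
    (μ : Measure (Fin d → ℝ))
    (hμ : μ = (ENNReal.ofReal (∫ x, Real.exp (-U x)))⁻¹ •
      volume.withDensity (fun x => ENNReal.ofReal (Real.exp (-U x))))
    (L : ℝ) (hL0 : 0 ≤ L)
    (hLbound : ∀ (k : Fin d) (x : Fin d → ℝ),
      iteratedFDeriv ℝ 2 U x ![Pi.single k 1, Pi.single k 1] ≤ L)
    (g : (Fin d → ℝ) → ℝ) (hg : ContDiff ℝ (⊤ : ℕ∞) g) (hgsupp : HasCompactSupport g) :
    ∑ k, ∫ x, (fderiv ℝ U x (Pi.single k 1)) ^ 2 * (fderiv ℝ g x (Pi.single k 1)) ^ 2 ∂μ ≤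
      2 * L * ∫ x, (∑ k, (fderiv ℝ g x (Pi.single k 1)) ^ 2) ∂μ +
        4 * ∑ k, ∫ x,
          (iteratedFDeriv ℝ 2 g x ![Pi.single k 1, Pi.single k 1]) ^ 2 ∂μ := by
  have hg2 : ContDiff ℝ 2 g := hg.of_le (by exact WithTop.coe_le_coe.2 (le_top : (2 : ℕ∞) ≤ ⊤))
  simp only [iter_two_aux hg2]
  have hLb' : ∀ (k : Fin d) (x : Fin d → ℝ),
      fderiv ℝ (fun y => fderiv ℝ U y (Pi.single k 1)) x (Pi.single k 1) ≤ L := by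
    intro k x
    rw [← iter_two_aux hU]
    exact hLbound k x
  -- convert integrals over μ into weighted volume integrals
  set c : ℝ := ((ENNReal.ofReal (∫ x, Real.exp (-U x)))⁻¹).toReal with hc
  have hc0 : 0 ≤ c := ENNReal.toReal_nonneg
  have hconv : ∀ f : (Fin d → ℝ) → ℝ,
      ∫ x, f x ∂μ = c * ∫ x, Real.exp (-U x) * f x := by
    intro f
    rw [hμ, integral_smul_measure]
    rw [show (volume.withDensity fun x => ENNReal.ofReal (Real.exp (-U x)))
        = volume.withDensity fun x => ((Real.exp (-U x)).toNNReal : ENNReal) from rfl]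
    rw [integral_withDensity_eq_integral_smul (f := fun x => (Real.exp (-U x)).toNNReal)
        (Real.measurable_exp.comp hU.continuous.measurable.neg).real_toNNReal f]
    rw [smul_eq_mul, hc]
    congr 1
    apply integral_congr_ae
    filter_upwards with x
    simp [NNReal.smul_def, Real.coe_toNNReal _ (Real.exp_pos (-U x)).le]
  simp only [hconv]
  -- integrability of the gradient pieces
  have hwc : ∀ k : Fin d, Continuous fun x => fderiv ℝ g x (Pi.single k 1) := by
    intro k
    exact ((hg.fderiv_right (m := (⊤ : ℕ∞)) (by simp)).clm_apply contDiff_const).continuous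
  have hintB : ∀ k : Fin d,
      Integrable (fun x => Real.exp (-U x) * (fderiv ℝ g x (Pi.single k 1)) ^ 2) := by
    intro k
    apply Continuous.integrable_of_hasCompactSupport
    · exact (Real.continuous_exp.comp hU.continuous.neg).mul ((hwc k).pow 2)
    · apply HasCompactSupport.intro hgsupp
      intro x hx
      simp [dz_aux (Pi.single k 1) x hx]
  -- split the middle integral
  have hmid : (∫ x, Real.exp (-U x) * ∑ k, (fderiv ℝ g x (Pi.single k 1)) ^ 2)
      = ∑ k, ∫ x, Real.exp (-U x) * (fderiv ℝ g x (Pi.single k 1)) ^ 2 := by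
    simp only [Finset.mul_sum]
    exact integral_finset_sum _ (fun k _ => hintB k)
  rw [hmid]
  have key : ∀ k : Fin d,
      (∫ x, Real.exp (-U x) * ((fderiv ℝ U x (Pi.single k 1)) ^ 2
          * (fderiv ℝ g x (Pi.single k 1)) ^ 2)) ≤
      2 * L * (∫ x, Real.exp (-U x) * (fderiv ℝ g x (Pi.single k 1)) ^ 2)
        + 4 * (∫ x, Real.exp (-U x)
            * (fderiv ℝ (fun y => fderiv ℝ g y (Pi.single k 1)) x (Pi.single k 1)) ^ 2) :=
    fun k => per_k hU hg hgsupp (hLv := hLb' k)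
  have hsum := Finset.sum_le_sum (fun k (_ : k ∈ Finset.univ) => key k)
  simp only [Finset.sum_add_distrib, ← Finset.mul_sum] at hsum
  calc ∑ k, c * ∫ x, Real.exp (-U x) * ((fderiv ℝ U x (Pi.single k 1)) ^ 2
          * (fderiv ℝ g x (Pi.single k 1)) ^ 2)
      = c * ∑ k, ∫ x, Real.exp (-U x) * ((fderiv ℝ U x (Pi.single k 1)) ^ 2
          * (fderiv ℝ g x (Pi.single k 1)) ^ 2) := by rw [Finset.mul_sum]
    _ ≤ c * (2 * L * ∑ k, (∫ x, Real.exp (-U x) * (fderiv ℝ g x (Pi.single k 1)) ^ 2)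
        + 4 * ∑ k, (∫ x, Real.exp (-U x)
            * (fderiv ℝ (fun y => fderiv ℝ g y (Pi.single k 1)) x (Pi.single k 1)) ^ 2)) := by
        apply mul_le_mul_of_nonneg_left _ hc0
        convert hsum using 2 <;> ring
    _ = 2 * L * (c * ∑ k, (∫ x, Real.exp (-U x) * (fderiv ℝ g x (Pi.single k 1)) ^ 2))
        + 4 * ∑ k, c * (∫ x, Real.exp (-U x)
            * (fderiv ℝ (fun y => fderiv ℝ g y (Pi.single k 1)) x (Pi.single k 1)) ^ 2) := by
        simp only [Finset.mul_sum]
        simp only [← Finset.mul_sum]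
        ring
end

section
/- (Bochner-type estimate under a lower curvature bound.) Suppose there exists κ ≥ 0 such that ∇²U(x) ⪰ −κ·I_d (as symmetric matrices) for all x ∈ ℝ^d. Then for every g ∈ C_c^∞(ℝ^d): ∫ ‖∇²g‖_F² dμ ≤ ∫ (Δg − ∇U·∇g)² dμ + κ ∫ |∇g|² dμ. -/
open MeasureTheory
open scoped NNReal ENNReal

variable {d : ℕ}

lemma aux_fderiv_fderiv (f : (Fin d → ℝ) → ℝ) (hf : ContDiff ℝ 2 f) (x v w : Fin d → ℝ) :
    fderiv ℝ (fun y => fderiv ℝ f y w) x v = fderiv ℝ (fderiv ℝ f) x v w := by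
  have h : DifferentiableAt ℝ (fderiv ℝ f) x :=
    ((hf.fderiv_right (m := 1) (by norm_num)).differentiable one_ne_zero).differentiableAt
  rw [fderiv_clm_apply h (differentiableAt_const w)]
  simp

lemma aux_symm (f : (Fin d → ℝ) → ℝ) (hf : ContDiff ℝ 2 f) (x v w : Fin d → ℝ) :
    fderiv ℝ (fderiv ℝ f) x v w = fderiv ℝ (fderiv ℝ f) x w v :=
  second_derivative_symmetric (fun y => ((hf.differentiable two_ne_zero) y).hasFDerivAt)
    (((hf.fderiv_right (m := 1) (by norm_num)).differentiable one_ne_zero _).hasFDerivAt) v w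

lemma fderiv_rho (U : (Fin d → ℝ) → ℝ) (hU : ContDiff ℝ 2 U) (x v : Fin d → ℝ) :
    fderiv ℝ (fun x => Real.exp (-U x)) x v = -(fderiv ℝ U x v) * Real.exp (-U x) := by
  have hdU : DifferentiableAt ℝ U x := (hU.differentiable two_ne_zero).differentiableAt
  rw [fderiv_exp (by fun_prop), fderiv_fun_neg]
  simp; ring

lemma ibp (U : (Fin d → ℝ) → ℝ) (hU : ContDiff ℝ 2 U)
    (ρ : (Fin d → ℝ) → ℝ) (hρ : ρ = fun x => Real.exp (-U x))
    (F : (Fin d → ℝ) → ℝ) (hF : ContDiff ℝ 1 F) (hFs : HasCompactSupport F) (v : Fin d → ℝ) :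
    ∫ x, fderiv ℝ F x v * ρ x = ∫ x, F x * fderiv ℝ U x v * ρ x := by
  have hρC : ContDiff ℝ 2 ρ := by
    rw [hρ]; exact ContDiff.exp hU.neg
  have hρc : Continuous ρ := hρC.continuous
  have hρd : Differentiable ℝ ρ := hρC.differentiable two_ne_zero
  have hFc : Continuous F := hF.continuous
  have hF'c : Continuous fun x => fderiv ℝ F x v :=
    ((hF.fderiv_right (m := 0) (by norm_num)).clm_apply contDiff_const).continuous
  have hρ'c : Continuous fun x => fderiv ℝ ρ x v :=
    ((hρC.fderiv_right (m := 0) (by norm_num)).clm_apply contDiff_const).continuous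
  have h1 : Integrable (fun x => fderiv ℝ F x v * ρ x) :=
    (hF'c.mul hρc).integrable_of_hasCompactSupport ((hFs.fderiv_apply ℝ v).mul_right)
  have h2 : Integrable (fun x => F x * fderiv ℝ ρ x v) :=
    (hFc.mul hρ'c).integrable_of_hasCompactSupport (hFs.mul_right)
  have h3 : Integrable (fun x => F x * ρ x) :=
    (hFc.mul hρc).integrable_of_hasCompactSupport (hFs.mul_right)
  have key := integral_mul_fderiv_eq_neg_fderiv_mul_of_integrable h1 h2 h3
    (fun x _ => hF.differentiable one_ne_zero x) (fun x _ => hρd x) (v := v)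
  have : ∀ x, F x * fderiv ℝ ρ x v = -(F x * fderiv ℝ U x v * ρ x) := by
    intro x
    rw [hρ, fderiv_rho U hU x v]
    ring
  simp only [this, integral_neg] at key
  linarith [key]

lemma core (d : ℕ) (U : (Fin d → ℝ) → ℝ) (hU : ContDiff ℝ 2 U)
    (g : (Fin d → ℝ) → ℝ) (hg : ContDiff ℝ (⊤ : ℕ∞) g) (hgs : HasCompactSupport g)
    (ρ : (Fin d → ℝ) → ℝ) (hρdef : ρ = fun x => Real.exp (-U x))
    (e : Fin d → Fin d → ℝ) (hedef : e = fun i => Pi.single i 1)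
    (G : Fin d → (Fin d → ℝ) → ℝ) (hGdef : G = fun k x => fderiv ℝ g x (e k))
    (H : Fin d → Fin d → (Fin d → ℝ) → ℝ) (hHdef : H = fun i j x => fderiv ℝ (G j) x (e i))
    (W : Fin d → (Fin d → ℝ) → ℝ) (hWdef : W = fun k x => fderiv ℝ U x (e k))
    (V : Fin d → Fin d → (Fin d → ℝ) → ℝ) (hVdef : V = fun i j x => fderiv ℝ (W j) x (e i))
    (Lg : (Fin d → ℝ) → ℝ) (hLgdef : Lg = fun x => (∑ k, H k k x) - ∑ k, W k x * G k x) :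
    ∫ x, (Lg x) ^ 2 * ρ x
      = (∫ x, (∑ i, ∑ j, (H i j x) ^ 2) * ρ x)
        + ∫ x, (∑ i, ∑ j, V i j x * G i x * G j x) * ρ x := by
  classical
  -- smoothness and support facts
  have hρC : ContDiff ℝ 2 ρ := by rw [hρdef]; exact ContDiff.exp hU.neg
  have hρc : Continuous ρ := hρC.continuous
  have hGC : ∀ k, ContDiff ℝ (⊤ : ℕ∞) (G k) := by
    intro k; rw [hGdef]; exact (hg.fderiv_right (by simp)).clm_apply contDiff_const
  have hGs : ∀ k, HasCompactSupport (G k) := by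
    intro k; rw [hGdef]; exact hgs.fderiv_apply ℝ (e k)
  have hGc : ∀ k, Continuous (G k) := fun k => (hGC k).continuous
  have hGd : ∀ k, Differentiable ℝ (G k) := fun k => (hGC k).differentiable (by simp)
  have hHC : ∀ i j, ContDiff ℝ (⊤ : ℕ∞) (H i j) := by
    intro i j; rw [hHdef]; exact ((hGC j).fderiv_right (by simp)).clm_apply contDiff_const
  have hHs : ∀ i j, HasCompactSupport (H i j) := by
    intro i j; rw [hHdef]; exact (hGs j).fderiv_apply ℝ (e i)
  have hHc : ∀ i j, Continuous (H i j) := fun i j => (hHC i j).continuous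
  have hHd : ∀ i j, Differentiable ℝ (H i j) := fun i j => (hHC i j).differentiable (by simp)
  have hWC : ∀ k, ContDiff ℝ 1 (W k) := by
    intro k; rw [hWdef]; exact (hU.fderiv_right (by norm_num)).clm_apply contDiff_const
  have hWc : ∀ k, Continuous (W k) := fun k => (hWC k).continuous
  have hWd : ∀ k, Differentiable ℝ (W k) := fun k => (hWC k).differentiable one_ne_zero
  have hVc : ∀ i j, Continuous (V i j) := by
    intro i j; rw [hVdef]
    exact (((hWC j).fderiv_right (m := 0) (by norm_num)).clm_apply contDiff_const).continuous
  have hLgC : ContDiff ℝ 1 Lg := by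
    rw [hLgdef]
    exact (ContDiff.sum fun k _ => ((hHC k k).of_le (by simp))).sub
      (ContDiff.sum fun k _ => (hWC k).mul ((hGC k).of_le (by simp)))
  have hLgc : Continuous Lg := hLgC.continuous
  have hLgd : Differentiable ℝ Lg := hLgC.differentiable one_ne_zero
  have hGts : ∀ k, tsupport (G k) ⊆ tsupport g := by
    intro k
    apply closure_minimal _ isClosed_closure
    intro x hx
    apply support_fderiv_subset ℝ (f := g)
    simp only [hGdef, Function.mem_support, ne_eq] at hx
    simp only [Function.mem_support, ne_eq]
    intro h
    exact hx (by rw [h]; rfl)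
  have hLgs : HasCompactSupport Lg := by
    apply hgs.mono'
    intro x hx
    by_contra hxg
    apply hx
    have hG0 : ∀ k, G k x = 0 := by
      intro k
      have : x ∉ tsupport (G k) := fun h => hxg (hGts k h)
      simpa [hGdef] using image_eq_zero_of_notMem_tsupport this
    have hH0 : ∀ k, H k k x = 0 := by
      intro k
      have hx' : x ∉ tsupport (G k) := fun h => hxg (hGts k h)
      simp only [hHdef]
      rw [fderiv_of_notMem_tsupport ℝ hx']
      rfl
    simp [hLgdef, hG0, hH0]
  -- helper: integrability
  have hg2 : ContDiff ℝ 2 g := hg.of_le (WithTop.coe_le_coe.2 (le_top : (2:ℕ∞) ≤ ⊤))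
  have intg : ∀ (φ : (Fin d → ℝ) → ℝ), Continuous φ → HasCompactSupport φ →
      Integrable (fun x => φ x * ρ x) := fun φ hc hs =>
    (hc.mul hρc).integrable_of_hasCompactSupport hs.mul_right
  -- symmetry of second derivatives of g
  have hsymH : ∀ i j x, H i j x = H j i x := by
    intro i j x
    simp only [hHdef, hGdef]
    rw [aux_fderiv_fderiv g hg2 x (e i) (e j), aux_symm g hg2 x (e i) (e j),
      ← aux_fderiv_fderiv g hg2 x (e j) (e i)]
  -- symmetry of third derivatives
  have hsym3 : ∀ i k x, fderiv ℝ (H k k) x (e i) = fderiv ℝ (H i k) x (e k) := by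
    intro i k x
    have hGk2 : ContDiff ℝ 2 (G k) := (hGC k).of_le (WithTop.coe_le_coe.2 (le_top : (2:ℕ∞) ≤ ⊤))
    simp only [hHdef]
    rw [aux_fderiv_fderiv (G k) hGk2 x (e i) (e k), aux_symm (G k) hGk2 x (e i) (e k),
      ← aux_fderiv_fderiv (G k) hGk2 x (e k) (e i)]
  -- continuity of derivatives
  have hH'c : ∀ i k, Continuous fun x => fderiv ℝ (H i k) x (e k) := fun i k =>
    (((hHC i k).fderiv_right (m := 0) (by simp)).clm_apply contDiff_const).continuous
  have hLg'c : ∀ i, Continuous fun x => fderiv ℝ Lg x (e i) := fun i =>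
    ((hLgC.fderiv_right (m := 0) (by norm_num)).clm_apply contDiff_const).continuous
  -- derivative of Lg
  have hD1 : ∀ i x, fderiv ℝ Lg x (e i)
      = (∑ k, fderiv ℝ (H k k) x (e i)) - ∑ k, (V i k x * G k x + W k x * H i k x) := by
    intro i x
    have d1 : DifferentiableAt ℝ (fun y => ∑ k, H k k y) x :=
      DifferentiableAt.fun_sum fun k _ => hHd k k x
    have d2 : DifferentiableAt ℝ (fun y => ∑ k, W k y * G k y) x :=
      DifferentiableAt.fun_sum fun k _ => (hWd k x).mul (hGd k x)
    rw [hLgdef]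
    rw [fderiv_fun_sub d1 d2, ContinuousLinearMap.sub_apply,
      fderiv_fun_sum (fun k _ => hHd k k x), fderiv_fun_sum (A := fun k y => W k y * G k y) (fun k _ => (hWd k x).mul (hGd k x)),
      ContinuousLinearMap.sum_apply, ContinuousLinearMap.sum_apply]
    congr 1
    apply Finset.sum_congr rfl
    intro k _
    rw [fderiv_fun_mul (hWd k x) (hGd k x)]
    simp only [ContinuousLinearMap.add_apply, ContinuousLinearMap.smul_apply, smul_eq_mul]
    have h1 : fderiv ℝ (G k) x (e i) = H i k x := by rw [hHdef]
    have h2 : fderiv ℝ (W k) x (e i) = V i k x := by rw [hVdef]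
    rw [h1, h2]
    ring
  -- integrabilities
  have iA : ∀ i, Integrable (fun x => fderiv ℝ Lg x (e i) * G i x * ρ x) := fun i =>
    intg _ ((hLg'c i).mul (hGc i)) (hGs i).mul_left
  have iB : ∀ i k, Integrable (fun x => (H i k x) ^ 2 * ρ x) := by
    intro i k
    apply intg _ ((hHc i k).pow 2)
    apply (hHs i k).mono'
    intro x hx
    have : H i k x ≠ 0 := fun h => by simp [h] at hx
    exact subset_closure this
  have iC : ∀ i k, Integrable (fun x => V i k x * G i x * G k x * ρ x) := fun i k =>
    intg _ (((hVc i k).mul (hGc i)).mul (hGc k)) (hGs k).mul_left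
  have iD : ∀ i k, Integrable (fun x => W k x * H i k x * G i x * ρ x) := fun i k =>
    intg _ (((hWc k).mul (hHc i k)).mul (hGc i)) (hGs i).mul_left
  have iE : ∀ i k, Integrable (fun x => fderiv ℝ (H i k) x (e k) * G i x * ρ x) := fun i k =>
    intg _ ((hH'c i k).mul (hGc i)) (hGs i).mul_left
  have iLH : ∀ k, Integrable (fun x => Lg x * H k k x * ρ x) := fun k =>
    intg _ (hLgc.mul (hHc k k)) (hHs k k).mul_left
  have iLWG : ∀ k, Integrable (fun x => Lg x * (W k x * G k x) * ρ x) := fun k =>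
    intg _ (hLgc.mul ((hWc k).mul (hGc k))) ((hGs k).mul_left).mul_left
  -- Step A : integration by parts against Lg * G i
  have hEqA : ∀ i, (∫ x, Lg x * H i i x * ρ x)
      = (∫ x, Lg x * (W i x * G i x) * ρ x) - ∫ x, fderiv ℝ Lg x (e i) * G i x * ρ x := by
    intro i
    have key := ibp U hU ρ hρdef (fun y => Lg y * G i y)
      (hLgC.mul ((hGC i).of_le (by simp))) (hGs i).mul_left (e i)
    have hptw : (fun x => fderiv ℝ (fun y => Lg y * G i y) x (e i) * ρ x)
        = fun x => fderiv ℝ Lg x (e i) * G i x * ρ x + Lg x * H i i x * ρ x := by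
      funext x
      rw [fderiv_fun_mul (hLgd x) (hGd i x)]
      simp only [ContinuousLinearMap.add_apply, ContinuousLinearMap.smul_apply, smul_eq_mul]
      have h1 : fderiv ℝ (G i) x (e i) = H i i x := by rw [hHdef]
      rw [h1]
      ring
    rw [hptw, integral_add (iA i) (iLH i)] at key
    have hr : (fun x => (Lg x * G i x) * fderiv ℝ U x (e i) * ρ x)
        = fun x => Lg x * (W i x * G i x) * ρ x := by
      funext x
      have : fderiv ℝ U x (e i) = W i x := by rw [hWdef]
      rw [this]; ring
    rw [hr] at key
    linarith [key]
  -- Step B : the main IBP for second derivatives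
  have hF3 : ∀ i k, (∫ x, fderiv ℝ (H i k) x (e k) * G i x * ρ x)
      = (∫ x, W k x * H i k x * G i x * ρ x) - ∫ x, (H i k x) ^ 2 * ρ x := by
    intro i k
    have key := ibp U hU ρ hρdef (fun y => G i y * H i k y)
      (((hGC i).of_le (by simp)).mul ((hHC i k).of_le (by simp))) (hGs i).mul_right (e k)
    have hptw : (fun x => fderiv ℝ (fun y => G i y * H i k y) x (e k) * ρ x)
        = fun x => fderiv ℝ (H i k) x (e k) * G i x * ρ x + (H i k x) ^ 2 * ρ x := by
      funext x
      rw [fderiv_fun_mul (hGd i x) (hHd i k x)]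
      simp only [ContinuousLinearMap.add_apply, ContinuousLinearMap.smul_apply, smul_eq_mul]
      have h1 : fderiv ℝ (G i) x (e k) = H k i x := by rw [hHdef]
      rw [h1, hsymH k i x]
      ring
    rw [hptw, integral_add (iE i k) (iB i k)] at key
    have hr : (fun x => (G i x * H i k x) * fderiv ℝ U x (e k) * ρ x)
        = fun x => W k x * H i k x * G i x * ρ x := by
      funext x
      have : fderiv ℝ U x (e k) = W k x := by rw [hWdef]
      rw [this]; ring
    rw [hr] at key
    linarith [key]
  -- Step C : expansion of A i
  have hF2 : ∀ i, (∫ x, fderiv ℝ Lg x (e i) * G i x * ρ x)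
      = (∑ k, ∫ x, fderiv ℝ (H i k) x (e k) * G i x * ρ x)
        - ∑ k, ((∫ x, V i k x * G i x * G k x * ρ x)
            + ∫ x, W k x * H i k x * G i x * ρ x) := by
    intro i
    have hptw : (fun x => fderiv ℝ Lg x (e i) * G i x * ρ x)
        = fun x => (∑ k, fderiv ℝ (H i k) x (e k) * G i x * ρ x)
            - ∑ k, (V i k x * G i x * G k x * ρ x + W k x * H i k x * G i x * ρ x) := by
      funext x
      rw [hD1 i x,
        show (∑ k, fderiv ℝ (H k k) x (e i)) = ∑ k, fderiv ℝ (H i k) x (e k) from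
          Finset.sum_congr rfl fun k _ => hsym3 i k x]
      rw [sub_mul, sub_mul, Finset.sum_mul, Finset.sum_mul, Finset.sum_mul, Finset.sum_mul]
      congr 1
      exact Finset.sum_congr rfl fun k _ => by ring
    have hA : Integrable (fun x => ∑ k, fderiv ℝ (H i k) x (e k) * G i x * ρ x) :=
      integrable_finset_sum _ fun k _ => iE i k
    have hB : Integrable
        (fun x => ∑ k, (V i k x * G i x * G k x * ρ x + W k x * H i k x * G i x * ρ x)) :=
      integrable_finset_sum _ fun k _ => (iC i k).add (iD i k)
    have hBsum : (∫ x, ∑ k, (V i k x * G i x * G k x * ρ x + W k x * H i k x * G i x * ρ x))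
        = ∑ k, ∫ x, (V i k x * G i x * G k x * ρ x + W k x * H i k x * G i x * ρ x) :=
      integral_finset_sum _ fun k _ => (iC i k).add (iD i k)
    rw [hptw, integral_sub hA hB, integral_finset_sum _ fun k _ => iE i k, hBsum]
    congr 1
    exact Finset.sum_congr rfl fun k _ => integral_add (iC i k) (iD i k)
  -- Step D : expansion of ∫ Lg² ρ
  have hF1 : (∫ x, Lg x ^ 2 * ρ x)
      = -∑ i, ∫ x, fderiv ℝ Lg x (e i) * G i x * ρ x := by
    have hsplit : (fun x => Lg x ^ 2 * ρ x)
        = fun x => (∑ k, Lg x * H k k x * ρ x) - ∑ k, Lg x * (W k x * G k x) * ρ x := by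
      funext x
      have hx : Lg x = (∑ k, H k k x) - ∑ k, W k x * G k x := by rw [hLgdef]
      calc Lg x ^ 2 * ρ x
          = (Lg x * ((∑ k, H k k x) - ∑ k, W k x * G k x)) * ρ x := by rw [← hx]; ring
        _ = (∑ k, Lg x * H k k x * ρ x) - ∑ k, Lg x * (W k x * G k x) * ρ x := by
            rw [mul_sub, sub_mul, Finset.mul_sum, Finset.mul_sum, Finset.sum_mul,
              Finset.sum_mul]
    have hA : Integrable (fun x => ∑ k, Lg x * H k k x * ρ x) :=
      integrable_finset_sum _ fun k _ => iLH k
    have hB : Integrable (fun x => ∑ k, Lg x * (W k x * G k x) * ρ x) :=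
      integrable_finset_sum _ fun k _ => iLWG k
    rw [hsplit, integral_sub hA hB,
      integral_finset_sum _ fun k _ => iLH k, integral_finset_sum _ fun k _ => iLWG k,
      Finset.sum_congr rfl fun i _ => hEqA i, Finset.sum_sub_distrib]
    ring
  -- combine everything
  have hfinal : (∫ x, Lg x ^ 2 * ρ x)
      = (∑ i, ∑ k, ∫ x, (H i k x) ^ 2 * ρ x)
        + ∑ i, ∑ k, ∫ x, V i k x * G i x * G k x * ρ x := by
    rw [hF1, Finset.sum_congr rfl fun i _ => hF2 i]
    have : ∀ i, (∑ k, ∫ x, fderiv ℝ (H i k) x (e k) * G i x * ρ x)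
        = ∑ k, ((∫ x, W k x * H i k x * G i x * ρ x) - ∫ x, (H i k x) ^ 2 * ρ x) :=
      fun i => Finset.sum_congr rfl fun k _ => hF3 i k
    rw [Finset.sum_congr rfl fun i _ => by rw [this i]]
    simp only [Finset.sum_sub_distrib, Finset.sum_add_distrib, neg_sub]
    ring
  rw [hfinal]
  congr 1
  · rw [show (fun x => (∑ i, ∑ j, (H i j x) ^ 2) * ρ x)
        = fun x => ∑ i, ∑ j, (H i j x) ^ 2 * ρ x from by
      funext x
      rw [Finset.sum_mul]
      exact Finset.sum_congr rfl fun i _ => Finset.sum_mul _ _ _]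
    rw [integral_finset_sum _ fun i _ => integrable_finset_sum _ fun j _ => iB i j]
    exact Finset.sum_congr rfl fun i _ => (integral_finset_sum _ fun j _ => iB i j).symm
  · rw [show (fun x => (∑ i, ∑ j, V i j x * G i x * G j x) * ρ x)
        = fun x => ∑ i, ∑ j, V i j x * G i x * G j x * ρ x from by
      funext x
      rw [Finset.sum_mul]
      exact Finset.sum_congr rfl fun i _ => Finset.sum_mul _ _ _]
    rw [integral_finset_sum _ fun i _ => integrable_finset_sum _ fun j _ => iC i j]
    exact Finset.sum_congr rfl fun i _ => (integral_finset_sum _ fun j _ => iC i j).symm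

lemma aux_bil (U : (Fin d → ℝ) → ℝ) (x v : Fin d → ℝ) :
    iteratedFDeriv ℝ 2 U x ![v, v]
      = ∑ i, ∑ j, v i * v j * fderiv ℝ (fderiv ℝ U) x (Pi.single i 1) (Pi.single j 1) := by
  rw [iteratedFDeriv_two_apply]
  have hv : v = ∑ i, v i • (Pi.single i 1 : Fin d → ℝ) := by
    funext k
    simp [Finset.sum_apply, Pi.single_apply]
  calc fderiv ℝ (fderiv ℝ U) x (![v, v] 0) (![v, v] 1)
      = fderiv ℝ (fderiv ℝ U) x (∑ i, v i • (Pi.single i 1 : Fin d → ℝ))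
          (∑ j, v j • (Pi.single j 1 : Fin d → ℝ)) := by rw [← hv]; simp
    _ = ∑ i, ∑ j, v i * v j * fderiv ℝ (fderiv ℝ U) x (Pi.single i 1) (Pi.single j 1) := by
        simp only [map_sum, ContinuousLinearMap.sum_apply]
        rw [Finset.sum_comm]
        refine Finset.sum_congr rfl fun i _ => Finset.sum_congr rfl fun j _ => ?_
        simp only [_root_.map_smul, ContinuousLinearMap.smul_apply, smul_eq_mul]
        ring

lemma aux_Zpos (U : (Fin d → ℝ) → ℝ) (hUc : Continuous U)
    (hUint : Integrable (fun x => Real.exp (-U x))) :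
    0 < ∫ x, Real.exp (-U x) := by
  apply (integral_pos_iff_support_of_nonneg (fun x => (Real.exp_pos _).le) hUint).2
  have : Function.support (fun x => Real.exp (-U x)) = Set.univ := by
    ext x; simp [Real.exp_ne_zero]
  rw [this]
  exact isOpen_univ.measure_pos volume ⟨0, trivial⟩

lemma aux_conv (U : (Fin d → ℝ) → ℝ) (hU : ContDiff ℝ 2 U)
    (hUint : Integrable (fun x => Real.exp (-U x)))
    (μ : Measure (Fin d → ℝ))
    (hμ : μ = (ENNReal.ofReal (∫ x, Real.exp (-U x)))⁻¹ •
      volume.withDensity (fun x => ENNReal.ofReal (Real.exp (-U x))))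
    (f : (Fin d → ℝ) → ℝ) :
    ∫ x, f x ∂μ = (∫ x, Real.exp (-U x))⁻¹ * ∫ x, f x * Real.exp (-U x) := by
  have hZpos : 0 < ∫ x, Real.exp (-U x) := aux_Zpos U hU.continuous hUint
  rw [hμ, integral_smul_measure]
  have hd : (fun x => ENNReal.ofReal (Real.exp (-U x)))
      = fun x => ((Real.toNNReal (Real.exp (-U x)) : ℝ≥0) : ℝ≥0∞) := by
    funext x; simp [ENNReal.ofReal]
  have hm : Measurable fun x => (Real.exp (-U x)).toNNReal :=
    (Real.continuous_exp.comp hU.continuous.neg).measurable.real_toNNReal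
  rw [hd, integral_withDensity_eq_integral_smul hm]
  rw [ENNReal.toReal_inv, ENNReal.toReal_ofReal hZpos.le]
  rw [smul_eq_mul]
  refine congrArg _ (integral_congr_ae (Filter.Eventually.of_forall fun x => ?_))
  show (Real.exp (-U x)).toNNReal • f x = f x * Real.exp (-U x)
  simp [NNReal.smul_def, Real.coe_toNNReal _ (Real.exp_pos _).le, smul_eq_mul, mul_comm]


/-- **Bochner-type estimate under a lower curvature bound.**
Let `μ ∝ e^{-U}` be the Gibbs probability measure on `ℝ^d` for `U ∈ C²` with `∫ e^{-U} < ∞`.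
If `∇²U(x) ⪰ -κ I_d` for all `x` (i.e. `-κ |v|² ≤ ⟨v, ∇²U(x) v⟩` for all `v`), with `κ ≥ 0`,
then for every `g ∈ C_c^∞(ℝ^d)`:
`∫ ‖∇²g‖_F² dμ ≤ ∫ (Δg - ∇U·∇g)² dμ + κ ∫ |∇g|² dμ`.
Here `∂_k φ x = fderiv ℝ φ x (Pi.single k 1)`,
`∂_{ij} φ x = iteratedFDeriv ℝ 2 φ x ![Pi.single i 1, Pi.single j 1]`,
`Δφ = ∑_k ∂_{kk} φ` and `∇U·∇g = ∑_k ∂_k U ∂_k g`. -/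
theorem stmt_14 (d : ℕ) (hd : 1 ≤ d) (U : (Fin d → ℝ) → ℝ)
    (hU : ContDiff ℝ 2 U)
    (hUint : Integrable (fun x => Real.exp (-U x)))
    (μ : Measure (Fin d → ℝ))
    (hμ : μ = (ENNReal.ofReal (∫ x, Real.exp (-U x)))⁻¹ •
      volume.withDensity (fun x => ENNReal.ofReal (Real.exp (-U x))))
    (κ : ℝ) (hκ : 0 ≤ κ)
    (hcurv : ∀ (x v : Fin d → ℝ),
      -κ * (∑ i, (v i) ^ 2) ≤ iteratedFDeriv ℝ 2 U x ![v, v])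
    (g : (Fin d → ℝ) → ℝ) (hg : ContDiff ℝ (⊤ : ℕ∞) g) (hgsupp : HasCompactSupport g) :
    ∫ x, (∑ i, ∑ j, (iteratedFDeriv ℝ 2 g x ![Pi.single i 1, Pi.single j 1]) ^ 2) ∂μ ≤
      ∫ x, ((∑ k, iteratedFDeriv ℝ 2 g x ![Pi.single k 1, Pi.single k 1]) -
          ∑ k, (fderiv ℝ U x (Pi.single k 1)) * (fderiv ℝ g x (Pi.single k 1))) ^ 2 ∂μ +
        κ * ∫ x, (∑ k, (fderiv ℝ g x (Pi.single k 1)) ^ 2) ∂μ := by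
  classical
  have hg2 : ContDiff ℝ 2 g := hg.of_le (WithTop.coe_le_coe.2 (le_top : (2:ℕ∞) ≤ ⊤))
  -- rewrite iterated derivatives of g
  have hiter : ∀ (i j : Fin d) (x : Fin d → ℝ),
      iteratedFDeriv ℝ 2 g x ![Pi.single i 1, Pi.single j 1]
        = fderiv ℝ (fun y => fderiv ℝ g y (Pi.single j 1)) x (Pi.single i 1) := by
    intro i j x
    rw [iteratedFDeriv_two_apply, aux_fderiv_fderiv g hg2 x (Pi.single i 1) (Pi.single j 1)]
    simp
  simp only [hiter]
  -- notation
  set Z : ℝ := ∫ x, Real.exp (-U x) with hZ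
  have hZpos : 0 < Z := aux_Zpos U hU.continuous hUint
  have hconv := aux_conv U hU hUint μ hμ
  rw [hconv, hconv, hconv]
  -- the core identity
  have hcore : (∫ x, ((∑ k, fderiv ℝ (fun y => fderiv ℝ g y (Pi.single k 1)) x (Pi.single k 1))
        - ∑ k, fderiv ℝ U x (Pi.single k 1) * fderiv ℝ g x (Pi.single k 1)) ^ 2
          * Real.exp (-U x))
      = (∫ x, (∑ i, ∑ j,
            (fderiv ℝ (fun y => fderiv ℝ g y (Pi.single j 1)) x (Pi.single i 1)) ^ 2)
          * Real.exp (-U x))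
        + ∫ x, (∑ i, ∑ j,
            fderiv ℝ (fun y => fderiv ℝ U y (Pi.single j 1)) x (Pi.single i 1)
              * fderiv ℝ g x (Pi.single i 1) * fderiv ℝ g x (Pi.single j 1))
          * Real.exp (-U x) :=
    core d U hU g hg hgsupp _ rfl _ rfl _ rfl _ rfl _ rfl _ rfl _ rfl
  rw [hcore]
  -- curvature lower bound on the Γ₂-term
  have hΓ : ∀ x, -κ * (∑ i, (fderiv ℝ g x (Pi.single i 1)) ^ 2)
      ≤ ∑ i, ∑ j, fderiv ℝ (fun y => fderiv ℝ U y (Pi.single j 1)) x (Pi.single i 1)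
          * fderiv ℝ g x (Pi.single i 1) * fderiv ℝ g x (Pi.single j 1) := by
    intro x
    have h := hcurv x (fun i => fderiv ℝ g x (Pi.single i 1))
    rw [aux_bil U x _] at h
    refine le_trans h (le_of_eq ?_)
    refine Finset.sum_congr rfl fun i _ => Finset.sum_congr rfl fun j _ => ?_
    rw [aux_fderiv_fderiv U hU x (Pi.single i 1) (Pi.single j 1)]
    ring
  -- integrability of the two comparands
  have hGc : ∀ k, Continuous fun x => fderiv ℝ g x (Pi.single k 1) := fun k =>
    ((hg.fderiv_right (m := (⊤ : ℕ∞)) (by simp)).clm_apply contDiff_const).continuous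
  have hG0 : ∀ (k : Fin d) x, x ∉ tsupport g → fderiv ℝ g x (Pi.single k 1) = 0 := by
    intro k x hx
    rw [fderiv_of_notMem_tsupport ℝ hx]; rfl
  have hVc : ∀ i j : Fin d,
      Continuous fun x => fderiv ℝ (fun y => fderiv ℝ U y (Pi.single j 1)) x (Pi.single i 1) :=
    fun i j => ((((hU.fderiv_right (m := 1) (by norm_num)).clm_apply
      contDiff_const).fderiv_right (m := 0) (by norm_num)).clm_apply contDiff_const).continuous
  have hρc : Continuous fun x => Real.exp (-U x) := Real.continuous_exp.comp hU.continuous.neg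
  have iΓ : Integrable (fun x => (∑ i, ∑ j,
      fderiv ℝ (fun y => fderiv ℝ U y (Pi.single j 1)) x (Pi.single i 1)
        * fderiv ℝ g x (Pi.single i 1) * fderiv ℝ g x (Pi.single j 1)) * Real.exp (-U x)) := by
    apply Continuous.integrable_of_hasCompactSupport
    · exact (continuous_finset_sum _ fun i _ => continuous_finset_sum _ fun j _ =>
        ((hVc i j).mul (hGc i)).mul (hGc j)).mul hρc
    · apply hgsupp.mono'
      intro x hx
      by_contra hxg
      apply hx
      simp [hG0 _ x hxg]
  have iN : Integrable (fun x =>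
      (-κ * (∑ i, (fderiv ℝ g x (Pi.single i 1)) ^ 2)) * Real.exp (-U x)) := by
    apply Continuous.integrable_of_hasCompactSupport
    · exact (continuous_const.mul (continuous_finset_sum _ fun i _ => (hGc i).pow 2)).mul hρc
    · apply hgsupp.mono'
      intro x hx
      by_contra hxg
      apply hx
      simp [hG0 _ x hxg]
  -- integral comparison
  have hmono : ∫ x, (-κ * (∑ i, (fderiv ℝ g x (Pi.single i 1)) ^ 2)) * Real.exp (-U x)
      ≤ ∫ x, (∑ i, ∑ j,
          fderiv ℝ (fun y => fderiv ℝ U y (Pi.single j 1)) x (Pi.single i 1)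
            * fderiv ℝ g x (Pi.single i 1) * fderiv ℝ g x (Pi.single j 1)) * Real.exp (-U x) :=
    integral_mono iN iΓ fun x =>
      mul_le_mul_of_nonneg_right (hΓ x) (Real.exp_pos _).le
  have hpull : (∫ x, (-κ * (∑ i, (fderiv ℝ g x (Pi.single i 1)) ^ 2)) * Real.exp (-U x))
      = -κ * ∫ x, (∑ i, (fderiv ℝ g x (Pi.single i 1)) ^ 2) * Real.exp (-U x) := by
    rw [← integral_const_mul]
    congr 1
    funext x
    ring
  rw [hpull] at hmono
  have hZinv : (0:ℝ) ≤ Z⁻¹ := (inv_nonneg).2 hZpos.le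
  set S := ∫ x, (∑ i, ∑ j,
      (fderiv ℝ (fun y => fderiv ℝ g y (Pi.single j 1)) x (Pi.single i 1)) ^ 2)
    * Real.exp (-U x)
  set T := ∫ x, (∑ i, ∑ j,
      fderiv ℝ (fun y => fderiv ℝ U y (Pi.single j 1)) x (Pi.single i 1)
        * fderiv ℝ g x (Pi.single i 1) * fderiv ℝ g x (Pi.single j 1)) * Real.exp (-U x)
  set N := ∫ x, (∑ i, (fderiv ℝ g x (Pi.single i 1)) ^ 2) * Real.exp (-U x)
  have hTN : (0:ℝ) ≤ T + κ * N := by linarith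
  nlinarith [mul_nonneg hZinv hTN]
end
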